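/- arXiv:1004.3358 — 4 statements merged into one kernel-verified Lean document; each statement's English description precedes it below -/
import Mathlib

section
/- The branched energy controls the L^{1/α} norm of the velocity: for every α ∈ (0,1), every finite Borel measure ρ on ℝ^d and every Borel map w : ℝ^d → ℝ^d, one has (∫ |w(x)|^{1/α} dρ(x))^α ≤ ∫ |w(x)| · ρ({x})^{α−1} dρ(x), where 0^{α−1} := +∞ and 0·(+∞) := 0. Equivalently, if ρ restricted to {w ≠ 0} is purely atomic with atoms x_i then (Σ_i ρ({x_i}) |w(x_i)|^{1/α})^α ≤ Σ_i ρ({x_i})^α |w(x_i)|, and the right-hand side is +∞ whenever ρ restricted to {w ≠ 0} is not purely atomic. -/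
open MeasureTheory Set Filter Topology NNReal ENNReal

noncomputable section

/-- Euclidean space `ℝ^d`. -/
abbrev Euc (d : ℕ) := EuclideanSpace ℝ (Fin d)

/-- The branched-transport integrand `F_α(ρ, w) = ∫ |w(x)| · ρ({x})^{α-1} dρ(x)`,
computed in `[0,∞]`, with the conventions `0 ^ (α-1) = ∞` (for `α < 1`) and
`0 · ∞ = 0`; these are the built-in conventions of `ENNReal.rpow` and of
multiplication on `ℝ≥0∞`. -/
def Fa {d : ℕ} (α : ℝ) (ρ : Measure (Euc d)) (w : Euc d → Euc d) : ℝ≥0∞ :=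
  ∫⁻ x, (‖w x‖₊ : ℝ≥0∞) * ρ {x} ^ (α - 1) ∂ρ

/-- An admissible pair `(ρ, v)`: a weakly continuous curve of Borel probability measures
supported in `Ω`, together with a Borel velocity field whose total momentum is integrable
in time, solving the continuity equation `∂ₜ ρ + div (v ρ) = 0` weakly with no-flux
boundary conditions (test functions vanish at times `t = 0` and `t = 1`). -/
structure AdmissiblePair {d : ℕ} (Ω : Set (Euc d)) (ρ : ℝ → Measure (Euc d))
    (v : ℝ → Euc d → Euc d) : Prop where
  prob : ∀ t ∈ Icc (0:ℝ) 1, IsProbabilityMeasure (ρ t)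
  supp : ∀ t ∈ Icc (0:ℝ) 1, ρ t Ωᶜ = 0
  weakCont : ∀ f : Euc d → ℝ, Continuous f →
    ContinuousOn (fun t => ∫ x, f x ∂(ρ t)) (Icc (0:ℝ) 1)
  vMeas : Measurable (Function.uncurry v)
  vInt : (∫⁻ t in Icc (0:ℝ) 1, ∫⁻ x, (‖v t x‖₊ : ℝ≥0∞) ∂(ρ t)) < ⊤
  contEq : ∀ φ : ℝ → Euc d → ℝ, ContDiff ℝ (⊤ : ℕ∞) (Function.uncurry φ) →
    (∀ x, φ 0 x = 0) → (∀ x, φ 1 x = 0) →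
    (∫ t in Icc (0:ℝ) 1,
      ((∫ x, deriv (fun s => φ s x) t ∂(ρ t)) +
        ∫ x, fderiv ℝ (φ t) x (v t x) ∂(ρ t))) = 0

/-- Membership in `𝔇(μ0, μ1)`: admissible pairs connecting `μ0` to `μ1`. -/
def InD {d : ℕ} (Ω : Set (Euc d)) (μ0 μ1 : Measure (Euc d))
    (ρ : ℝ → Measure (Euc d)) (v : ℝ → Euc d → Euc d) : Prop :=
  AdmissiblePair Ω ρ v ∧ ρ 0 = μ0 ∧ ρ 1 = μ1

/-- The branched-transport energy `ℱ_α(ρ, v) = ∫₀¹ F_α(ρ_t, v(t,·)) dt`. -/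
def energyF {d : ℕ} (α : ℝ) (ρ : ℝ → Measure (Euc d)) (v : ℝ → Euc d → Euc d) : ℝ≥0∞ :=
  ∫⁻ t in Icc (0:ℝ) 1, Fa α (ρ t) (v t)

/-- `ℬ_α(μ0, μ1)`, the infimum of the energy over admissible pairs in `𝔇(μ0, μ1)`
(equal to `+∞` if there is no admissible pair). -/
def Balpha {d : ℕ} (Ω : Set (Euc d)) (α : ℝ) (μ0 μ1 : Measure (Euc d)) : ℝ≥0∞ :=
  ⨅ (ρ : ℝ → Measure (Euc d)) (v : ℝ → Euc d → Euc d) (_ : InD Ω μ0 μ1 ρ v),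
    energyF α ρ v

/-- `γ` is a coupling (transport plan) between `μ` and `ν`. -/
def IsCoupling {d : ℕ} (γ : Measure (Euc d × Euc d)) (μ ν : Measure (Euc d)) : Prop :=
  IsProbabilityMeasure γ ∧ γ.map Prod.fst = μ ∧ γ.map Prod.snd = ν

/-- The `p`-Wasserstein distance `W_p(μ, ν)`, valued in `[0,∞]`. -/
def Wasser {d : ℕ} (p : ℝ) (μ ν : Measure (Euc d)) : ℝ≥0∞ :=
  ⨅ (γ : Measure (Euc d × Euc d)) (_ : IsCoupling γ μ ν),
    (∫⁻ z, (‖z.1 - z.2‖₊ : ℝ≥0∞) ^ p ∂γ) ^ (1 / p)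

lemma aux_mul_rpow_self (x : ℝ≥0∞) (hx0 : x ≠ 0) (hxt : x ≠ ∞) (β : ℝ) :
    x * x ^ β = x ^ (1 + β) := by
  rw [ENNReal.rpow_add 1 β hx0 hxt, ENNReal.rpow_one]

lemma aux_pow (α : ℝ) (hα0 : 0 < α) (a b : ℝ≥0∞) (ha0 : a ≠ 0) (hat : a ≠ ∞)
    (hb0 : b ≠ 0) (hbt : b ≠ ∞) :
    a ^ (1/α) = (a * b ^ (α-1)) * ((a * b ^ (α-1)) * b) ^ ((1-α)/α) := by
  have hb1 : b ^ (α - 1) * b = b ^ α := by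
    have h := ENNReal.rpow_add (α - 1) 1 hb0 hbt
    rw [ENNReal.rpow_one] at h
    rw [← h]; norm_num
  have hsplit : ((a * b ^ (α - 1)) * b) ^ ((1-α)/α)
      = a ^ ((1-α)/α) * b ^ (1 - α) := by
    rw [mul_assoc, hb1,
      ENNReal.mul_rpow_of_ne_top hat (ENNReal.rpow_ne_top_of_nonneg hα0.le hbt),
      ← ENNReal.rpow_mul]
    congr 2
    field_simp
  rw [hsplit]
  have hring : a * b ^ (α-1) * (a ^ ((1-α)/α) * b ^ (1-α))
      = (a * a ^ ((1-α)/α)) * (b ^ (α-1) * b ^ (1-α)) := by ring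
  rw [hring, aux_mul_rpow_self a ha0 hat, ← ENNReal.rpow_add _ _ hb0 hbt]
  have h1 : α - 1 + (1 - α) = 0 := by ring
  rw [h1, ENNReal.rpow_zero, mul_one]
  congr 1
  field_simp
  ring

/-- the branched energy controls the `L^{1/α}` norm of the velocity:
`(∫ |w|^{1/α} dρ)^α ≤ ∫ |w(x)| · ρ({x})^{α-1} dρ(x)`, with the conventions
`0^{α-1} = ∞` and `0 · ∞ = 0` built into `ℝ≥0∞`. -/
theorem branched_energy_controls_Lp_norm
    (d : ℕ) (hd : 1 ≤ d) (α : ℝ) (hα : α ∈ Ioo (0:ℝ) 1)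
    (ρ : Measure (Euc d)) (hρ : IsFiniteMeasure ρ)
    (w : Euc d → Euc d) (hw : Measurable w) :
    (∫⁻ x, (‖w x‖₊ : ℝ≥0∞) ^ (1 / α) ∂ρ) ^ α ≤ Fa α ρ w := by
  obtain ⟨hα0, hα1⟩ := hα
  set c : Euc d → ℝ≥0∞ := fun x => (‖w x‖₊ : ℝ≥0∞) * ρ {x} ^ (α - 1) with hc_def
  set R : ℝ≥0∞ := Fa α ρ w with hR
  by_cases hRtop : R = ∞
  · rw [hRtop]; exact le_top
  have hsing : Measurable fun x : Euc d => ρ {x} := by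
    have hdiag : MeasurableSet (Set.diagonal (Euc d)) :=
      isClosed_diagonal.measurableSet
    have := measurable_measure_prodMk_left (ν := ρ) hdiag
    convert this using 2 with x
    congr 1
    ext y
    simp [Set.diagonal, eq_comm]
  have hcmeas : Measurable c :=
    (hw.nnnorm.coe_nnreal_ennreal).mul
      ((ENNReal.continuous_rpow_const.measurable).comp hsing)
  have hkey : ∀ x, c x * ρ {x} ≤ R := by
    intro x
    have h1 : ∫⁻ y in {x}, c y ∂ρ = c x * ρ {x} := lintegral_singleton c x
    have h2 : ∫⁻ y in {x}, c y ∂ρ ≤ R := setLIntegral_le_lintegral _ _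
    rw [h1] at h2; exact h2
  have hfin : ∀ᵐ x ∂ρ, c x < ∞ := ae_lt_top hcmeas hRtop
  set β : ℝ := (1 - α) / α with hβ
  have hβ0 : 0 ≤ β := div_nonneg (by linarith) hα0.le
  have h1β : (1 : ℝ) + β = 1 / α := by rw [hβ]; field_simp; ring
  have hpt : ∀ᵐ x ∂ρ, (‖w x‖₊ : ℝ≥0∞) ^ (1 / α) ≤ c x * R ^ β := by
    filter_upwards [hfin] with x hx
    rcases eq_or_ne (‖w x‖₊ : ℝ≥0∞) 0 with h0 | h0
    · rw [h0, ENNReal.zero_rpow_of_pos (by positivity)]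
      exact zero_le
    · have hρx : ρ {x} ≠ 0 := by
        intro h
        rw [hc_def] at hx
        simp only [h, ENNReal.zero_rpow_of_neg (by linarith : α - 1 < 0)] at hx
        rw [ENNReal.mul_top h0] at hx
        exact (lt_irrefl _ hx)
      have hρxt : ρ {x} ≠ ∞ := measure_ne_top ρ {x}
      have hwt : (‖w x‖₊ : ℝ≥0∞) ≠ ∞ := ENNReal.coe_ne_top
      have halg : (‖w x‖₊ : ℝ≥0∞) ^ (1 / α) = c x * (c x * ρ {x}) ^ β :=
        aux_pow α hα0 _ _ h0 hwt hρx hρxt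
      rw [halg]
      exact mul_le_mul_right (ENNReal.rpow_le_rpow (hkey x) hβ0) _
  have hmain : ∫⁻ x, (‖w x‖₊ : ℝ≥0∞) ^ (1 / α) ∂ρ ≤ R * R ^ β := by
    calc ∫⁻ x, (‖w x‖₊ : ℝ≥0∞) ^ (1 / α) ∂ρ ≤ ∫⁻ x, c x * R ^ β ∂ρ :=
          lintegral_mono_ae hpt
      _ = (∫⁻ x, c x ∂ρ) * R ^ β := lintegral_mul_const _ hcmeas
      _ = R * R ^ β := rfl
  rcases eq_or_ne R 0 with hR0 | hR0
  · rw [hR0] at hmain ⊢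
    simp only [zero_mul] at hmain
    have hz := le_antisymm hmain zero_le
    rw [hz, ENNReal.zero_rpow_of_pos hα0]
  · have hRR : R * R ^ β = R ^ (1 / α) := by
      rw [aux_mul_rpow_self R hR0 hRtop, h1β]
    rw [hRR] at hmain
    calc (∫⁻ x, (‖w x‖₊ : ℝ≥0∞) ^ (1 / α) ∂ρ) ^ α ≤ (R ^ (1 / α)) ^ α :=
          ENNReal.rpow_le_rpow hmain hα0.le
      _ = R := by
          rw [← ENNReal.rpow_mul, one_div, inv_mul_cancel₀ hα0.ne', ENNReal.rpow_one]


end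
end

section
/- Atomicity lemma: let Ω ⊆ ℝ^d be compact, let λ and μ be finite positive Borel measures on Ω, and let α ∈ (0,1). Suppose λ(S)^α ≤ μ(S) for every Borel set S ⊆ Ω. Then λ is purely atomic: there exists a countable set A ⊆ Ω with λ(Ω ∖ A) = 0; moreover Σ_{x ∈ A} λ({x})^α ≤ μ(Ω). -/
open MeasureTheory Set Filter Topology NNReal ENNReal

noncomputable section

/-- Atomicity lemma: if `ν(S)^α ≤ μ(S)` for every Borel `S ⊆ Ω`, then `ν`
is purely atomic: it is concentrated on a countable set `A`, and `Σ_{x ∈ A} ν({x})^α ≤ μ(Ω)`. -/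
theorem atomicity_lemma
    (d : ℕ) (hd : 1 ≤ d) (Ω : Set (Euc d)) (hΩc : IsCompact Ω)
    (α : ℝ) (hα : α ∈ Ioo (0:ℝ) 1)
    (ν μ : Measure (Euc d)) (hνf : IsFiniteMeasure ν) (hμf : IsFiniteMeasure μ)
    (hνs : ν Ωᶜ = 0) (hμs : μ Ωᶜ = 0)
    (h : ∀ S : Set (Euc d), MeasurableSet S → S ⊆ Ω → ν S ^ α ≤ μ S) :
    ∃ A : Set (Euc d), A.Countable ∧ ν (Ω \ A) = 0 ∧
      (∑' x : A, ν {(x : Euc d)} ^ α) ≤ μ Ω := by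
  classical
  obtain ⟨hα0, hα1⟩ := hα
  have hΩm : MeasurableSet Ω := hΩc.isClosed.measurableSet
  -- The set of atoms
  have hApos : Set.Countable {x : Euc d | 0 < ν {x}} := by
    refine Measure.countable_meas_pos_of_disjoint_of_meas_iUnion_ne_top (μ := ν)
      (As := fun x : Euc d => {x}) (fun x => measurableSet_singleton x)
      (fun x y hxy => ?_) (measure_ne_top ν _)
    simpa [Function.onFun] using hxy
  set A : Set (Euc d) := Ω ∩ {x : Euc d | 0 < ν {x}} with hAdef
  have hAcount : A.Countable := hApos.mono inter_subset_right
  have hAmeas : MeasurableSet A := hAcount.measurableSet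
  -- ν gives no mass to singletons off A
  have hoff : ∀ x : Euc d, ν ({x} ∩ Aᶜ) = 0 := by
    intro x
    by_cases hx : x ∈ A
    · have : ({x} : Set (Euc d)) ∩ Aᶜ = ∅ := by
        ext y; simp (config := {contextual := true}) [hx]
      simp [this]
    · have hx0 : ν {x} = 0 := by
        by_cases hxΩ : x ∈ Ω
        · have : ¬ (0 < ν {x}) := fun hpos => hx ⟨hxΩ, hpos⟩
          simpa using this
        · exact le_antisymm (le_trans (measure_mono (by simpa using hxΩ)) hνs.le) zero_le
      exact le_antisymm (le_trans (measure_mono inter_subset_left) hx0.le) zero_le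
  set ν' : Measure (Euc d) := ν.restrict Aᶜ with hν'def
  have hν'fin : IsFiniteMeasure ν' := by
    constructor
    exact lt_of_le_of_lt (Measure.restrict_apply_le _ _) (measure_lt_top ν _)
  -- Key estimate
  have key : ∀ ε : ℝ≥0∞, ε ≠ 0 → ε ≠ ∞ → ν (Ω \ A) ≤ μ Ω * ε ^ (1 - α) := by
    intro ε hε0 hεtop
    -- around every point, a small open ball of ν'-measure < ε
    have hball : ∀ x : Euc d, ∃ U : Set (Euc d), IsOpen U ∧ x ∈ U ∧ ν' U < ε := by
      intro x
      have hanti : Antitone (fun n : ℕ => Metric.closedBall x (1 / (n + 1 : ℝ))) := by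
        intro m n hmn
        apply Metric.closedBall_subset_closedBall
        have h1 : (0:ℝ) < (m:ℝ) + 1 := by positivity
        exact one_div_le_one_div_of_le h1 (by exact_mod_cast Nat.succ_le_succ hmn)
      have hiInt : (⋂ n : ℕ, Metric.closedBall x (1 / (n + 1 : ℝ))) = {x} := by
        apply Set.eq_singleton_iff_unique_mem.2
        constructor
        · refine Set.mem_iInter.2 fun n => Metric.mem_closedBall.2 ?_
          simp only [dist_self]
          positivity
        · intro y hy
          have hle : ∀ n : ℕ, dist y x ≤ 1 / (n + 1 : ℝ) := fun n =>
            Metric.mem_closedBall.1 (Set.mem_iInter.1 hy n)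
          have h0 : dist y x ≤ 0 :=
            ge_of_tendsto' tendsto_one_div_add_atTop_nhds_zero_nat hle
          exact dist_le_zero.1 h0
      have hlim : Filter.Tendsto (fun n : ℕ => ν' (Metric.closedBall x (1 / (n + 1 : ℝ))))
          Filter.atTop (nhds (ν' (⋂ n : ℕ, Metric.closedBall x (1 / (n + 1 : ℝ))))) :=
        tendsto_measure_iInter_atTop
          (fun n => Metric.isClosed_closedBall.measurableSet.nullMeasurableSet)
          hanti ⟨0, measure_ne_top _ _⟩
      have hx0 : ν' (⋂ n : ℕ, Metric.closedBall x (1 / (n + 1 : ℝ))) = 0 := by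
        rw [hiInt, hν'def, Measure.restrict_apply (measurableSet_singleton x)]
        exact hoff x
      rw [hx0] at hlim
      have hev : ∀ᶠ n : ℕ in Filter.atTop,
          ν' (Metric.closedBall x (1 / (n + 1 : ℝ))) < ε :=
        hlim.eventually_lt_const (by exact lt_of_le_of_ne zero_le (Ne.symm hε0))
      obtain ⟨n, hn⟩ := hev.exists
      refine ⟨Metric.ball x (1 / (n + 1 : ℝ)), Metric.isOpen_ball, ?_, ?_⟩
      · apply Metric.mem_ball_self; positivity
      · exact lt_of_le_of_lt (measure_mono Metric.ball_subset_closedBall) hn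
    choose U hUopen hUmem hUε using hball
    -- countable subcover of Ω
    obtain ⟨T, hTc, hTeq⟩ :=
      TopologicalSpace.isOpen_iUnion_countable (fun i : Ω => U (i : Euc d))
        (fun i => hUopen _)
    have hΩcover : Ω ⊆ ⋃ i ∈ T, U ((i : Ω) : Euc d) := by
      rw [hTeq]
      intro x hx
      exact Set.mem_iUnion.2 ⟨⟨x, hx⟩, hUmem x⟩
    rcases T.eq_empty_or_nonempty with hTe | hTne
    · have : Ω \ A = ∅ := by
        apply Set.eq_empty_of_subset_empty
        intro x hx
        have := hΩcover hx.1
        simp [hTe] at this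
      simp [this]
    obtain ⟨e, hTe⟩ := hTc.exists_eq_range hTne
    set f : ℕ → Set (Euc d) := fun n => U ((e n : Ω) : Euc d) with hfdef
    have hfmeas : ∀ n, MeasurableSet (f n) := fun n => (hUopen _).measurableSet
    have hcov : Ω ⊆ ⋃ n, f n := by
      intro x hx
      have := hΩcover hx
      rw [hTe] at this
      simpa [hfdef] using this
    set S : ℕ → Set (Euc d) := fun n => disjointed f n ∩ (Ω \ A) with hSdef
    have hSmeas : ∀ n, MeasurableSet (S n) := fun n =>
      (MeasurableSet.disjointed hfmeas n).inter (hΩm.diff hAmeas)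
    have hSdisj : Pairwise (Function.onFun Disjoint S) := fun m n hmn =>
      ((disjoint_disjointed f) hmn).mono inter_subset_left inter_subset_left
    have hSunion : (⋃ n, S n) = Ω \ A := by
      rw [hSdef]
      simp only [← Set.iUnion_inter, iUnion_disjointed]
      exact Set.inter_eq_right.2 (Set.diff_subset.trans hcov)
    have hSsmall : ∀ n, ν (S n) ≤ ε := by
      intro n
      have hsub : S n ⊆ f n ∩ Aᶜ := by
        intro x hx
        exact ⟨disjointed_subset f n hx.1, fun hxA => hx.2.2 hxA⟩
      refine le_trans (measure_mono hsub) ?_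
      have : ν (f n ∩ Aᶜ) = ν' (f n) := by
        rw [hν'def, Measure.restrict_apply (hfmeas n)]
      rw [this]
      exact (hUε _).le
    have hpoint : ∀ n, ν (S n) ≤ ν (S n) ^ α * ε ^ (1 - α) := by
      intro n
      rcases eq_or_ne (ν (S n)) 0 with h0 | h0
      · simp [h0]
      · have hne : ν (S n) ≠ ∞ := measure_ne_top _ _
        have h1 : ν (S n) = ν (S n) ^ α * ν (S n) ^ (1 - α) := by
          rw [← ENNReal.rpow_add _ _ h0 hne]
          norm_num
        calc ν (S n) = ν (S n) ^ α * ν (S n) ^ (1 - α) := h1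
          _ ≤ ν (S n) ^ α * ε ^ (1 - α) :=
              mul_le_mul_right (ENNReal.rpow_le_rpow (hSsmall n) (by linarith)) _
    calc ν (Ω \ A) = ν (⋃ n, S n) := by rw [hSunion]
      _ = ∑' n, ν (S n) := measure_iUnion hSdisj hSmeas
      _ ≤ ∑' n, ν (S n) ^ α * ε ^ (1 - α) :=
          ENNReal.tsum_le_tsum hpoint
      _ = (∑' n, ν (S n) ^ α) * ε ^ (1 - α) := ENNReal.tsum_mul_right
      _ ≤ (∑' n, μ (S n)) * ε ^ (1 - α) := by
          refine mul_le_mul_left (ENNReal.tsum_le_tsum fun n => ?_) _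
          exact h (S n) (hSmeas n) ((Set.inter_subset_right).trans Set.diff_subset)
      _ ≤ μ Ω * ε ^ (1 - α) := by
          refine mul_le_mul_left ?_ _
          rw [← measure_iUnion hSdisj hSmeas, hSunion]
          exact measure_mono Set.diff_subset
  -- conclude ν (Ω \ A) = 0
  have hc0 : ν (Ω \ A) = 0 := by
    by_contra hc
    set c : ℝ≥0∞ := ν (Ω \ A) with hcdef
    have hcne : c ≠ ∞ := measure_ne_top _ _
    set K : ℝ≥0∞ := 2 * (μ Ω + 1) with hKdef
    have hK0 : K ≠ 0 := by simp [hKdef]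
    have hKtop : K ≠ ∞ := by
      simp [hKdef, ENNReal.mul_eq_top, ENNReal.add_eq_top, measure_ne_top]
    set b : ℝ≥0∞ := c / K with hbdef
    have hb0 : b ≠ 0 := by
      rw [hbdef, Ne, ENNReal.div_eq_zero_iff]
      push_neg
      exact ⟨hc, hKtop⟩
    have hbtop : b ≠ ∞ := by
      rw [hbdef, Ne, ENNReal.div_eq_top]
      push_neg
      exact ⟨fun _ => hK0, fun hct => absurd hct hcne⟩
    set ε : ℝ≥0∞ := b ^ ((1 - α)⁻¹) with hεdef
    have hε0 : ε ≠ 0 := by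
      rw [hεdef]
      simp only [ne_eq, ENNReal.rpow_eq_zero_iff, not_or, not_and_or]
      exact ⟨Or.inl hb0, Or.inl hbtop⟩
    have hεtop : ε ≠ ∞ := by
      rw [hεdef]
      simp only [ne_eq, ENNReal.rpow_eq_top_iff, not_or, not_and_or]
      exact ⟨Or.inl hb0, Or.inl hbtop⟩
    have hεpow : ε ^ (1 - α) = b := by
      rw [hεdef, ← ENNReal.rpow_mul, inv_mul_cancel₀ (by linarith : (1:ℝ) - α ≠ 0),
        ENNReal.rpow_one]
    have hkey := key ε hε0 hεtop
    rw [hεpow] at hkey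
    have hlt : μ Ω * b < c := by
      have h1 : μ Ω * b = (μ Ω / K) * c := by
        rw [hbdef, div_eq_mul_inv, div_eq_mul_inv]
        ring
      rw [h1]
      have h2 : μ Ω / K < 1 := by
        rw [ENNReal.div_lt_iff (Or.inl hK0) (Or.inl hKtop), one_mul, hKdef, two_mul]
        calc μ Ω < μ Ω + 1 := ENNReal.lt_add_right (measure_ne_top _ _) one_ne_zero
          _ ≤ (μ Ω + 1) + (μ Ω + 1) := le_add_self
      calc (μ Ω / K) * c < 1 * c := (by rw [mul_comm _ c, mul_comm 1 c]; exact ENNReal.mul_lt_mul_right hc hcne h2)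
        _ = c := one_mul c
    exact hlt.not_ge hkey
  refine ⟨A, hAcount, hc0, ?_⟩
  calc (∑' x : A, ν {(x : Euc d)} ^ α) ≤ ∑' x : A, μ {(x : Euc d)} :=
        ENNReal.tsum_le_tsum fun x =>
          h {(x : Euc d)} (measurableSet_singleton _)
            (Set.singleton_subset_iff.2 x.2.1)
    _ = μ A := by
        rw [← measure_biUnion hAcount (fun x _ y _ hxy => by simpa using hxy)
          (fun x _ => measurableSet_singleton x)]
        simp
    _ ≤ μ Ω := measure_mono inter_subset_left


end
end

section
/- Extreme points of the transportation polytope are sparse: let n, m ≥ 1, let r ∈ ℝ^n and c ∈ ℝ^m have nonnegative entries with Σ_i r_i = Σ_k c_k, and let 𝔐 = {A ∈ ℝ^{n×m} : A_{ik} ≥ 0 for all i,k, Σ_{k} A_{ik} = r_i for all i, Σ_{i} A_{ik} = c_k for all k}. If A is an extreme point of the convex set 𝔐, then the number of pairs (i,k) with A_{ik} ≠ 0 is at most n + m. -/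
open Finset
set_option maxHeartbeats 1000000

private lemma transport_aux_kernel (n m : ℕ) (S : Finset (Fin n × Fin m))
    (hScard : n + m < S.card) :
    ∃ D : Matrix (Fin n) (Fin m) ℝ, D ≠ 0 ∧ (∀ i, ∑ k, D i k = 0) ∧
      (∀ k, ∑ i, D i k = 0) ∧ (∀ p : Fin n × Fin m, p ∉ S → D p.1 p.2 = 0) := by
  classical
  let B : ({p // p ∈ S} → ℝ) →ₗ[ℝ] Matrix (Fin n) (Fin m) ℝ :=
    { toFun := fun x i k => if h : (i, k) ∈ S then x ⟨(i, k), h⟩ else 0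
      map_add' := by
        intro x y; funext i k
        by_cases h : (i, k) ∈ S <;> simp [Matrix.add_apply, h] <;>
          change _ = (if h : (i, k) ∈ S then x ⟨(i, k), h⟩ else 0) +
            (if h : (i, k) ∈ S then y ⟨(i, k), h⟩ else 0) <;> simp [h]
      map_smul' := by
        intro a x; funext i k
        by_cases h : (i, k) ∈ S <;> simp [Matrix.smul_apply, h] <;>
          change _ = a * (if h : (i, k) ∈ S then x ⟨(i, k), h⟩ else 0) <;> simp [h] }
  have hB : ∀ x i k, B x i k = if h : (i, k) ∈ S then x ⟨(i, k), h⟩ else 0 := fun _ _ _ => rfl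
  let L : ({p // p ∈ S} → ℝ) →ₗ[ℝ] (Fin n → ℝ) × (Fin m → ℝ) :=
    { toFun := fun x => (fun i => ∑ k, B x i k, fun k => ∑ i, B x i k)
      map_add' := by
        intro x y
        simp only [map_add, Matrix.add_apply]
        ext <;> simp [Finset.sum_add_distrib]
      map_smul' := by
        intro a x
        simp only [map_smul, Matrix.smul_apply]
        ext <;> simp [Finset.mul_sum] }
  have hnotinj : ¬ Function.Injective L := by
    intro hinj
    have h1 := LinearMap.finrank_le_finrank_of_injective hinj
    have h2 : Module.finrank ℝ ({p // p ∈ S} → ℝ) = S.card := by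
      simp [Module.finrank_pi]
    have h3 : Module.finrank ℝ ((Fin n → ℝ) × (Fin m → ℝ)) = n + m := by
      simp [Module.finrank_prod]
    omega
  rw [Function.not_injective_iff] at hnotinj
  obtain ⟨x, y, hxy, hne⟩ := hnotinj
  set d := x - y with hd
  have hdne : d ≠ 0 := sub_ne_zero.mpr hne
  have hLd : L d = 0 := by rw [hd, map_sub, hxy, sub_self]
  refine ⟨B d, ?_, ?_, ?_, ?_⟩
  · intro h0
    apply hdne
    funext p
    have h1 : B d p.1.1 p.1.2 = d p := by
      rw [hB, dif_pos (by simpa using p.2)]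
    rw [h0] at h1
    simpa using h1.symm
  · intro i
    have := congrArg (fun z => z.1 i) hLd
    exact this
  · intro k
    have := congrArg (fun z => z.2 k) hLd
    exact this
  · intro p hp
    rw [hB, dif_neg]
    simpa using hp

/-- Extreme points of the transportation polytope are sparse: if `A` is an
extreme point of the polytope of nonnegative `n × m` matrices with row sums `r` and
column sums `c` (where `r, c ≥ 0` and `Σ r = Σ c`), then `A` has at most `n + m`
nonzero entries. -/
theorem transport_polytope_extreme_points_sparse
    (n m : ℕ) (hn : 1 ≤ n) (hm : 1 ≤ m)
    (r : Fin n → ℝ) (c : Fin m → ℝ)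
    (hr : ∀ i, 0 ≤ r i) (hc : ∀ k, 0 ≤ c k)
    (hbal : ∑ i, r i = ∑ k, c k)
    (M : Set (Matrix (Fin n) (Fin m) ℝ))
    (hM : M = {A | (∀ i k, 0 ≤ A i k) ∧ (∀ i, ∑ k, A i k = r i) ∧ (∀ k, ∑ i, A i k = c k)})
    (A : Matrix (Fin n) (Fin m) ℝ)
    (hA : A ∈ Set.extremePoints ℝ M) :
    Set.ncard {p : Fin n × Fin m | A p.1 p.2 ≠ 0} ≤ n + m := by
  classical
  by_contra hcard
  push_neg at hcard
  set S : Finset (Fin n × Fin m) := {p : Fin n × Fin m | A p.1 p.2 ≠ 0}.toFinset with hSdef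
  have hScard : n + m < S.card := by
    rwa [Set.ncard_eq_toFinset_card'] at hcard
  have hSmem : ∀ p : Fin n × Fin m, p ∈ S ↔ A p.1 p.2 ≠ 0 := by
    intro p; simp [hSdef]
  obtain ⟨D, hDne, hDrow, hDcol, hDoff⟩ := transport_aux_kernel n m S hScard
  have hAM := hA.1
  rw [hM] at hAM
  obtain ⟨hApos, hArow, hAcol⟩ := hAM
  have hSne : S.Nonempty := Finset.card_pos.mp (by omega)
  set a := S.inf' hSne (fun p => A p.1 p.2) with ha
  set b := S.sup' hSne (fun p => |D p.1 p.2|) with hb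
  have hapos : 0 < a := by
    rw [ha, Finset.lt_inf'_iff]
    intro p hp
    exact lt_of_le_of_ne (hApos p.1 p.2) (Ne.symm ((hSmem p).1 hp))
  have hbnn : 0 ≤ b := by
    obtain ⟨p, hp⟩ := hSne
    exact le_trans (abs_nonneg _) (Finset.le_sup' (fun p => |D p.1 p.2|) hp)
  set ε := a / (1 + b) with hε
  have hεpos : 0 < ε := div_pos hapos (by linarith)
  have hkey : ∀ p : Fin n × Fin m, ε * |D p.1 p.2| ≤ A p.1 p.2 := by
    intro p
    by_cases hp : p ∈ S
    · calc ε * |D p.1 p.2| ≤ ε * (1 + b) := by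
            apply mul_le_mul_of_nonneg_left _ hεpos.le
            have := Finset.le_sup' (fun p => |D p.1 p.2|) hp
            linarith
      _ = a := by rw [hε]; field_simp
      _ ≤ A p.1 p.2 := Finset.inf'_le _ hp
    · rw [hDoff p hp, abs_zero, mul_zero]
      exact hApos p.1 p.2
  have hmem : ∀ (s : ℝ), |s| = 1 → A + (s * ε) • D ∈ M := by
    intro s hs
    rw [hM]
    refine ⟨fun i k => ?_, fun i => ?_, fun k => ?_⟩
    · have h1 : |s * ε * D i k| ≤ A i k := by
        rw [abs_mul, abs_mul, hs, one_mul, abs_of_pos hεpos]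
        exact hkey (i, k)
      have h2 := neg_abs_le (s * ε * D i k)
      simp only [Matrix.add_apply, Matrix.smul_apply, smul_eq_mul]
      linarith
    · simp only [Matrix.add_apply, Matrix.smul_apply, smul_eq_mul]
      rw [Finset.sum_add_distrib, ← Finset.mul_sum, hDrow i, hArow i, mul_zero, add_zero]
    · simp only [Matrix.add_apply, Matrix.smul_apply, smul_eq_mul]
      rw [Finset.sum_add_distrib, ← Finset.mul_sum, hDcol k, hAcol k, mul_zero, add_zero]
  have hmem1 : A + ε • D ∈ M := by
    have := hmem 1 (by norm_num)
    simpa using this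
  have hmem2 : A - ε • D ∈ M := by
    have h := hmem (-1) (by norm_num)
    have h2 : A + ((-1 : ℝ) * ε) • D = A - ε • D := by
      rw [neg_one_mul, neg_smul, sub_eq_add_neg]
    rwa [h2] at h
  have hopen : A ∈ openSegment ℝ (A + ε • D) (A - ε • D) := by
    refine ⟨1/2, 1/2, by norm_num, by norm_num, by norm_num, ?_⟩
    funext i k
    simp only [Matrix.add_apply, Matrix.sub_apply, Matrix.smul_apply, smul_eq_mul,
      Pi.add_apply, Pi.smul_apply]
    ring
  have heq : A + ε • D = A := (hA.2 hmem1 hmem2 hopen)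
  have hεD : ε • D = 0 := add_eq_left.mp heq
  exact hDne ((smul_eq_zero.mp hεD).resolve_left hεpos.ne')
end

section
/- Branched transport between finitely atomic measures is controlled by the 1/α-Wasserstein distance: let α ∈ (0,1), n ≥ 1, and let μ0, μ1 be Borel probability measures on Ω each supported on a set of at most n points. Then there exists an admissible pair (ρ, v) ∈ 𝔇(μ0, μ1) with ℱ_α(ρ, v) ≤ (2n)^{1−α} · W_{1/α}(μ0, μ1); in particular ℬ_α(μ0, μ1) ≤ (2n)^{1−α} W_{1/α}(μ0, μ1). -/
open MeasureTheory Set Filter Topology NNReal ENNReal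

noncomputable section

set_option linter.unusedSectionVars false
section Helpers
open scoped Classical
variable {α : Type*} [MeasurableSpace α] [MeasurableSingletonClass α]

lemma integrable_dirac'' {E : Type*} [NormedAddCommGroup E] {f : α → E}
    (hf : StronglyMeasurable f) (a : α) : Integrable f (Measure.dirac a) := by
  refine ⟨hf.aestronglyMeasurable, ?_⟩
  simp only [HasFiniteIntegral, lintegral_dirac]
  exact ENNReal.coe_lt_top

lemma integral_sum_smul_dirac {ι : Type*} (s : Finset ι) (m : ι → ℝ≥0) (x : ι → α)
    (f : α → ℝ) (hf : StronglyMeasurable f) :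
    ∫ y, f y ∂(∑ i ∈ s, (m i : ℝ≥0∞) • Measure.dirac (x i))
      = ∑ i ∈ s, (m i : ℝ) * f (x i) := by
  rw [integral_finset_sum_measure]
  · refine Finset.sum_congr rfl fun i _ => ?_
    rw [integral_smul_measure, integral_dirac]
    simp [smul_eq_mul]
  · intro i _
    rcases eq_or_ne (m i) 0 with h | h
    · simp [h]
    · exact (integrable_smul_measure (by simpa using h) ENNReal.coe_ne_top).2
        (integrable_dirac'' hf (x i))

lemma lintegral_sum_smul_dirac {ι : Type*} (s : Finset ι) (m : ι → ℝ≥0) (x : ι → α)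
    (f : α → ℝ≥0∞) :
    ∫⁻ y, f y ∂(∑ i ∈ s, (m i : ℝ≥0∞) • Measure.dirac (x i))
      = ∑ i ∈ s, (m i : ℝ≥0∞) * f (x i) := by
  rw [lintegral_finset_sum_measure]
  refine Finset.sum_congr rfl fun i _ => ?_
  rw [lintegral_smul_measure, lintegral_dirac, smul_eq_mul]

lemma apply_sum_smul_dirac {ι : Type*} (s : Finset ι) (m : ι → ℝ≥0) (x : ι → α)
    (E : Set α) (hE : MeasurableSet E) :
    (∑ i ∈ s, (m i : ℝ≥0∞) • Measure.dirac (x i)) E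
      = ∑ i ∈ s, if x i ∈ E then (m i : ℝ≥0∞) else 0 := by
  rw [Measure.finset_sum_apply]
  refine Finset.sum_congr rfl fun i _ => ?_
  rw [Measure.smul_apply, Measure.dirac_apply' _ hE]
  by_cases h : x i ∈ E <;> simp [h, indicator]

/-- An atomic measure equals the sum of its atoms. -/
lemma measure_eq_sum_dirac (μ : Measure α) (S : Finset α) (hS : μ (↑S)ᶜ = 0) :
    μ = ∑ x ∈ S, μ {x} • Measure.dirac x := by
  ext E hE
  classical
  have h1 : μ E = μ (E ∩ ↑S) := by
    have h0 : μ (E \ ↑S) = 0 :=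
      measure_mono_null (fun x hx => hx.2) hS
    rw [← measure_inter_add_diff E (S.measurableSet), h0, add_zero]
  have h2 : E ∩ ↑S = ⋃ x ∈ S.filter (· ∈ E), ({x} : Set α) := by
    ext y
    simp only [mem_inter_iff, Finset.mem_coe, mem_iUnion, Finset.mem_filter, mem_singleton_iff]
    constructor
    · rintro ⟨hyE, hyS⟩; exact ⟨y, ⟨hyS, hyE⟩, rfl⟩
    · rintro ⟨x, ⟨hxS, hxE⟩, rfl⟩; exact ⟨hxE, hxS⟩
  have h3 : μ (E ∩ ↑S) = ∑ x ∈ S.filter (· ∈ E), μ {x} := by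
    rw [h2, measure_biUnion_finset]
    · intro x hx y hy hxy
      simp only [Function.onFun]
      exact Set.disjoint_singleton.mpr hxy
    · intro x _; exact measurableSet_singleton x
  rw [h1, h3, Measure.finset_sum_apply]
  rw [Finset.sum_filter]
  refine Finset.sum_congr rfl fun x hx => ?_
  rw [Measure.smul_apply, Measure.dirac_apply' _ hE]
  by_cases h : x ∈ E <;> simp [h, indicator]

end Helpers

section Holder
lemma holder_count {ι : Type*} (s : Finset ι) (u : ι → ℝ≥0∞) {α : ℝ}
    (hα0 : 0 < α) (hα1 : α < 1) :
    ∑ i ∈ s, u i ^ α ≤ (s.card : ℝ≥0∞) ^ (1 - α) * (∑ i ∈ s, u i) ^ α := by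
  rcases s.eq_empty_or_nonempty with rfl | hne
  · simp
  have hN0 : (s.card : ℝ≥0∞) ≠ 0 := by
    simp [Finset.card_eq_zero, hne.ne_empty]
  have hNt : (s.card : ℝ≥0∞) ≠ ⊤ := by simp
  set N : ℝ≥0∞ := (s.card : ℝ≥0∞) with hN
  have hw : ∑ _i ∈ s, N⁻¹ = 1 := by
    rw [Finset.sum_const, nsmul_eq_mul, ENNReal.mul_inv_cancel hN0 hNt]
  have hp : (1:ℝ) ≤ 1 / α := by
    rw [le_div_iff₀ hα0, one_mul]; exact hα1.le
  have key := ENNReal.rpow_arith_mean_le_arith_mean_rpow s (fun _ => N⁻¹)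
    (fun i => u i ^ α) hw hp
  -- key : (∑ N⁻¹ * (u i ^ α)) ^ (1/α) ≤ ∑ N⁻¹ * ((u i ^ α) ^ (1/α))
  have hsimp : ∀ i, (u i ^ α) ^ (1/α) = u i := by
    intro i
    rw [← ENNReal.rpow_mul, mul_one_div, div_self hα0.ne', ENNReal.rpow_one]
  simp only [hsimp] at key
  have key2 : ((∑ i ∈ s, N⁻¹ * u i ^ α) ^ (1/α)) ^ α ≤ (∑ i ∈ s, N⁻¹ * u i) ^ α :=
    ENNReal.rpow_le_rpow key hα0.le
  rw [← ENNReal.rpow_mul, one_div_mul_cancel hα0.ne', ENNReal.rpow_one] at key2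
  rw [← Finset.mul_sum, ← Finset.mul_sum] at key2
  have key3 : ∑ i ∈ s, u i ^ α ≤ N * ((N⁻¹ * ∑ i ∈ s, u i) ^ α) := by
    calc ∑ i ∈ s, u i ^ α = N * (N⁻¹ * ∑ i ∈ s, u i ^ α) := by
          rw [← mul_assoc, ENNReal.mul_inv_cancel hN0 hNt, one_mul]
      _ ≤ N * ((N⁻¹ * ∑ i ∈ s, u i) ^ α) := mul_le_mul_right key2 N
  refine key3.trans (le_of_eq ?_)
  rw [ENNReal.mul_rpow_of_nonneg _ _ hα0.le, ← mul_assoc]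
  congr 1
  rw [ENNReal.inv_rpow, ENNReal.rpow_sub _ _ hN0 hNt, ENNReal.rpow_one, div_eq_mul_inv]

end Holder

section Sparsify
open scoped Classical
variable {X Y : Type*}

lemma kernel_vec (A : Finset X) (B : Finset Y) (S : Finset (X × Y))
    (hSF : S ⊆ A ×ˢ B) (hcard : A.card + B.card < S.card) :
    ∃ Q : X × Y → ℝ, (∀ p ∉ S, Q p = 0) ∧ (∃ p ∈ S, Q p ≠ 0) ∧
      (∀ x ∈ A, ∑ y ∈ B, Q (x, y) = 0) ∧ (∀ y ∈ B, ∑ x ∈ A, Q (x, y) = 0) := by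
  have hnotli : ¬ LinearIndependent ℝ (fun p : ↥S =>
      ((fun x => if (p : X × Y).1 = ↑x then (1:ℝ) else 0,
        fun y => if (p : X × Y).2 = ↑y then (1:ℝ) else 0) : (↥A → ℝ) × (↥B → ℝ))) := by
    intro hli
    have h1 := hli.fintype_card_le_finrank
    have h2 : Module.finrank ℝ ((↥A → ℝ) × (↥B → ℝ)) = A.card + B.card := by
      simp [Module.finrank_prod, Module.finrank_fintype_fun_eq_card]
    rw [Fintype.card_coe, h2] at h1
    omega
  obtain ⟨g, hgsum, i0, hi0⟩ := Fintype.not_linearIndependent_iff.mp hnotli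
  refine ⟨fun p => if h : p ∈ S then g ⟨p, h⟩ else 0, ?_, ?_, ?_, ?_⟩
  · intro p hp; simp [hp]
  · exact ⟨i0.1, i0.2, by simp [i0.2, hi0]⟩
  · -- row sums
    intro x hx
    beta_reduce
    have e1 := congrFun (congrArg Prod.fst hgsum) ⟨x, hx⟩
    rw [Prod.fst_sum, Finset.sum_apply] at e1
    simp only [Prod.smul_mk, Prod.fst_zero, Pi.zero_apply, Prod.smul_fst, Pi.smul_apply,
      smul_eq_mul, mul_ite, mul_one, mul_zero] at e1
    have e2 : ∑ i : ↥S, (if i.1.1 = x then g i else 0)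
        = ∑ p ∈ S, (if p.1 = x then (if h : p ∈ S then g ⟨p, h⟩ else 0) else 0) := by
      rw [← Finset.sum_coe_sort S (fun p => (if p.1 = x then (if h : p ∈ S then g ⟨p, h⟩ else 0) else 0))]
      refine Finset.sum_congr rfl fun i _ => ?_
      simp [i.2]
    rw [e2] at e1
    have e3 : ∑ p ∈ A ×ˢ B, (if p.1 = x then (if h : p ∈ S then g ⟨p, h⟩ else 0) else 0)
        = ∑ p ∈ S, (if p.1 = x then (if h : p ∈ S then g ⟨p, h⟩ else 0) else 0) := by
      refine (Finset.sum_subset hSF fun p _ hp => by simp [hp]).symm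
    rw [← e3, Finset.sum_product] at e1
    calc ∑ y ∈ B, (if h : (x, y) ∈ S then g ⟨(x,y), h⟩ else 0)
        = ∑ x' ∈ A, ∑ y ∈ B, (if (x', y).1 = x then (if h : (x', y) ∈ S then g ⟨(x',y), h⟩ else 0) else 0) := by
          rw [Finset.sum_eq_single x]
          · refine Finset.sum_congr rfl fun y _ => by simp
          · intro x' _ hne
            refine Finset.sum_eq_zero fun y _ => by simp [hne]
          · intro hxA; exact absurd hx hxA
      _ = 0 := e1
  · -- column sums
    intro y hy
    beta_reduce
    have e1 := congrFun (congrArg Prod.snd hgsum) ⟨y, hy⟩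
    rw [Prod.snd_sum, Finset.sum_apply] at e1
    simp only [Prod.smul_mk, Prod.snd_zero, Pi.zero_apply, Prod.smul_snd, Pi.smul_apply,
      smul_eq_mul, mul_ite, mul_one, mul_zero] at e1
    have e2 : ∑ i : ↥S, (if i.1.2 = y then g i else 0)
        = ∑ p ∈ S, (if p.2 = y then (if h : p ∈ S then g ⟨p, h⟩ else 0) else 0) := by
      rw [← Finset.sum_coe_sort S (fun p => (if p.2 = y then (if h : p ∈ S then g ⟨p, h⟩ else 0) else 0))]
      refine Finset.sum_congr rfl fun i _ => ?_
      simp [i.2]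
    rw [e2] at e1
    have e3 : ∑ p ∈ A ×ˢ B, (if p.2 = y then (if h : p ∈ S then g ⟨p, h⟩ else 0) else 0)
        = ∑ p ∈ S, (if p.2 = y then (if h : p ∈ S then g ⟨p, h⟩ else 0) else 0) := by
      refine (Finset.sum_subset hSF fun p _ hp => by simp [hp]).symm
    rw [← e3, Finset.sum_product_right] at e1
    calc ∑ x ∈ A, (if h : (x, y) ∈ S then g ⟨(x,y), h⟩ else 0)
        = ∑ y' ∈ B, ∑ x ∈ A, (if (x, y').2 = y then (if h : (x, y') ∈ S then g ⟨(x,y'), h⟩ else 0) else 0) := by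
          rw [Finset.sum_eq_single y]
          · refine Finset.sum_congr rfl fun x _ => by simp
          · intro y' _ hne
            refine Finset.sum_eq_zero fun x _ => by simp [hne]
          · intro hyB; exact absurd hy hyB
      _ = 0 := e1

lemma sparsify (A : Finset X) (B : Finset Y) (cr : X × Y → ℝ) :
    ∀ (k : ℕ) (m : X × Y → ℝ), (∀ p, 0 ≤ m p) → (∀ p ∉ A ×ˢ B, m p = 0) →
    ((A ×ˢ B).filter (fun p => m p ≠ 0)).card ≤ k →
    ∃ m' : X × Y → ℝ, (∀ p, 0 ≤ m' p) ∧ (∀ p ∉ A ×ˢ B, m' p = 0) ∧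
      (∀ x ∈ A, ∑ y ∈ B, m' (x, y) = ∑ y ∈ B, m (x, y)) ∧
      (∀ y ∈ B, ∑ x ∈ A, m' (x, y) = ∑ x ∈ A, m (x, y)) ∧
      (∑ p ∈ A ×ˢ B, m' p * cr p ≤ ∑ p ∈ A ×ˢ B, m p * cr p) ∧
      ((A ×ˢ B).filter (fun p => m' p ≠ 0)).card ≤ A.card + B.card := by
  intro k
  induction k with
  | zero =>
    intro m hm0 hmF hc
    exact ⟨m, hm0, hmF, fun x _ => rfl, fun y _ => rfl, le_refl _, by omega⟩
  | succ k ih =>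
    intro m hm0 hmF hc
    by_cases hsmall : ((A ×ˢ B).filter (fun p => m p ≠ 0)).card ≤ A.card + B.card
    · exact ⟨m, hm0, hmF, fun _ _ => rfl, fun _ _ => rfl, le_refl _, hsmall⟩
    push_neg at hsmall
    set S := (A ×ˢ B).filter (fun p => m p ≠ 0) with hS
    obtain ⟨Q0, hQ0off, hQ0ne, hQ0row, hQ0col⟩ :=
      kernel_vec A B S (Finset.filter_subset _ _) hsmall
    set Q : X × Y → ℝ := if (∑ p ∈ A ×ˢ B, Q0 p * cr p) ≤ 0 then Q0 else (-Q0) with hQdef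
    have hQcases : Q = Q0 ∨ Q = -Q0 := by
      by_cases h : (∑ p ∈ A ×ˢ B, Q0 p * cr p) ≤ 0
      · left; simp [hQdef, h]
      · right; simp [hQdef, h]
    have hQoff : ∀ p ∉ S, Q p = 0 := by
      intro p hp; rcases hQcases with h | h <;> simp [h, hQ0off p hp]
    have hQne : ∃ p ∈ S, Q p ≠ 0 := by
      obtain ⟨p, hpS, hp⟩ := hQ0ne
      refine ⟨p, hpS, ?_⟩
      rcases hQcases with h | h <;> simp [h, hp]
    have hQrow : ∀ x ∈ A, ∑ y ∈ B, Q (x, y) = 0 := by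
      intro x hx
      rcases hQcases with h | h
      · simp [h, hQ0row x hx]
      · simp only [h, Pi.neg_apply]
        rw [Finset.sum_neg_distrib, hQ0row x hx, neg_zero]
    have hQcol : ∀ y ∈ B, ∑ x ∈ A, Q (x, y) = 0 := by
      intro y hy
      rcases hQcases with h | h
      · simp [h, hQ0col y hy]
      · simp only [h, Pi.neg_apply]
        rw [Finset.sum_neg_distrib, hQ0col y hy, neg_zero]
    have hQcost : ∑ p ∈ A ×ˢ B, Q p * cr p ≤ 0 := by
      by_cases h : (∑ p ∈ A ×ˢ B, Q0 p * cr p) ≤ 0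
      · have : Q = Q0 := by simp [hQdef, h]
        rw [this]; exact h
      · have hQeq : Q = -Q0 := by simp [hQdef, h]
        push_neg at h
        rw [hQeq]
        simp only [Pi.neg_apply, neg_mul]
        rw [Finset.sum_neg_distrib]
        linarith
    -- a negative entry exists
    have hSsub : ∀ p ∈ S, p ∈ A ×ˢ B ∧ m p ≠ 0 := by
      intro p hp; exact Finset.mem_filter.mp hp
    have hQneS : ∀ p, Q p ≠ 0 → p ∈ S := by
      intro p; contrapose!; exact hQoff p
    have hneg : ∃ p ∈ S, Q p < 0 := by
      obtain ⟨p0, hp0S, hp0⟩ := hQne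
      rcases lt_or_gt_of_ne hp0 with hlt | hgt
      · exact ⟨p0, hp0S, hlt⟩
      by_contra hno
      push_neg at hno
      have hx0 : p0.1 ∈ A := (Finset.mem_product.mp (hSsub p0 hp0S).1).1
      have hy0 : p0.2 ∈ B := (Finset.mem_product.mp (hSsub p0 hp0S).1).2
      have hnn : ∀ y ∈ B, 0 ≤ Q (p0.1, y) := by
        intro y hy
        by_cases h : (p0.1, y) ∈ S
        · exact hno _ h
        · rw [hQoff _ h]
      have hpos : 0 < ∑ y ∈ B, Q (p0.1, y) := by
        have hle : Q (p0.1, p0.2) ≤ ∑ y ∈ B, Q (p0.1, y) :=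
          Finset.single_le_sum hnn hy0
        rw [Prod.mk.eta] at hle
        linarith
      rw [hQrow p0.1 hx0] at hpos
      exact lt_irrefl _ hpos
    -- the pivot
    have hNegne : (S.filter (fun p => Q p < 0)).Nonempty := by
      obtain ⟨p, hpS, hp⟩ := hneg
      exact ⟨p, Finset.mem_filter.mpr ⟨hpS, hp⟩⟩
    obtain ⟨pb, hpbNeg, hpbmin⟩ :=
      Finset.exists_min_image (S.filter (fun p => Q p < 0)) (fun p => m p / (-Q p)) hNegne
    have hpbS : pb ∈ S := (Finset.mem_filter.mp hpbNeg).1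
    have hQpb : Q pb < 0 := (Finset.mem_filter.mp hpbNeg).2
    have hmpb : 0 < m pb := (hm0 pb).lt_of_ne' (hSsub pb hpbS).2
    set θ : ℝ := m pb / (-Q pb) with hθdef
    have hθ0 : 0 < θ := div_pos hmpb (by linarith)
    set m'' : X × Y → ℝ := fun p => m p + θ * Q p with hm''def
    have h''0 : ∀ p, 0 ≤ m'' p := by
      intro p
      by_cases h : 0 ≤ Q p
      · exact add_nonneg (hm0 p) (mul_nonneg hθ0.le h)
      push_neg at h
      have hpS : p ∈ S := hQneS p h.ne
      have hpNeg : p ∈ S.filter (fun p => Q p < 0) := Finset.mem_filter.mpr ⟨hpS, h⟩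
      have hle : θ ≤ m p / (-Q p) := hpbmin p hpNeg
      have h2 : θ * (-Q p) ≤ m p := by
        rw [← le_div_iff₀ (by linarith : (0:ℝ) < -Q p)]
        exact hle
      simp only [hm''def]
      nlinarith
    have h''off : ∀ p ∉ A ×ˢ B, m'' p = 0 := by
      intro p hp
      have hpS : p ∉ S := fun h => hp (Finset.filter_subset _ _ h)
      simp [hm''def, hmF p hp, hQoff p hpS]
    have h''pb : m'' pb = 0 := by
      have : θ * Q pb = -m pb := by
        have hQne0 : Q pb ≠ 0 := ne_of_lt hQpb
        rw [hθdef, div_mul_eq_mul_div, mul_div_assoc, div_neg, div_self hQne0]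
        ring
      simp [hm''def, this]
    have h''card : ((A ×ˢ B).filter (fun p => m'' p ≠ 0)).card ≤ k := by
      have hsub : (A ×ˢ B).filter (fun p => m'' p ≠ 0) ⊆ S.erase pb := by
        intro p hp
        obtain ⟨hpF, hpne⟩ := Finset.mem_filter.mp hp
        have hmp : m p ≠ 0 := by
          intro h0
          have hpS : p ∉ S := by
            simp [hS, Finset.mem_filter, h0]
          exact hpne (by simp [hm''def, h0, hQoff p hpS])
        have hpS : p ∈ S := Finset.mem_filter.mpr ⟨hpF, hmp⟩
        refine Finset.mem_erase.mpr ⟨?_, hpS⟩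
        rintro rfl
        exact hpne h''pb
      calc ((A ×ˢ B).filter (fun p => m'' p ≠ 0)).card ≤ (S.erase pb).card :=
            Finset.card_le_card hsub
        _ = S.card - 1 := Finset.card_erase_of_mem hpbS
        _ ≤ k := by omega
    obtain ⟨m', h1, h2, h3, h4, h5, h6⟩ := ih m'' h''0 h''off h''card
    refine ⟨m', h1, h2, ?_, ?_, ?_, h6⟩
    · intro x hx
      rw [h3 x hx]
      simp only [hm''def]
      rw [Finset.sum_add_distrib, ← Finset.mul_sum, hQrow x hx, mul_zero, add_zero]
    · intro y hy
      rw [h4 y hy]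
      simp only [hm''def]
      rw [Finset.sum_add_distrib, ← Finset.mul_sum, hQcol y hy, mul_zero, add_zero]
    · refine h5.trans ?_
      have : ∑ p ∈ A ×ˢ B, m'' p * cr p
          = ∑ p ∈ A ×ˢ B, m p * cr p + θ * ∑ p ∈ A ×ˢ B, Q p * cr p := by
        rw [Finset.mul_sum, ← Finset.sum_add_distrib]
        refine Finset.sum_congr rfl fun p _ => by simp [hm''def]; ring
      rw [this]
      nlinarith

end Sparsify

section Kinematics
open scoped Classical
def ppos {d : ℕ} (p : Euc d × Euc d) (t : ℝ) : Euc d := p.1 + t • (p.2 - p.1)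

lemma ppos_zero {d : ℕ} (p : Euc d × Euc d) : ppos p 0 = p.1 := by simp [ppos]

lemma ppos_one {d : ℕ} (p : Euc d × Euc d) : ppos p 1 = p.2 := by simp [ppos]

lemma ppos_cont {d : ℕ} (p : Euc d × Euc d) : Continuous (ppos p) :=
  continuous_const.add (continuous_id.smul continuous_const)

lemma ppos_mem {d : ℕ} {Ω : Set (Euc d)} (hΩ : Convex ℝ Ω) {p : Euc d × Euc d}
    (h1 : p.1 ∈ Ω) (h2 : p.2 ∈ Ω) {t : ℝ} (ht : t ∈ Icc (0:ℝ) 1) : ppos p t ∈ Ω := by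
  have := hΩ h1 h2 (by linarith [ht.1, ht.2] : (0:ℝ) ≤ 1 - t) ht.1 (by ring)
  have heq : (1 - t) • p.1 + t • p.2 = ppos p t := by
    simp only [ppos, sub_smul, one_smul, smul_sub]
    abel
  rwa [heq] at this

lemma ppos_hasDerivAt {d : ℕ} (p : Euc d × Euc d) (t : ℝ) :
    HasDerivAt (ppos p) (p.2 - p.1) t := by
  have h : HasDerivAt (fun s : ℝ => s • (p.2 - p.1)) ((1:ℝ) • (p.2 - p.1)) t :=
    (hasDerivAt_id t).smul_const (p.2 - p.1)
  rw [one_smul] at h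
  exact h.const_add p.1

def vel {d : ℕ} : List (Euc d × Euc d) → ℝ → Euc d → Euc d
  | [] => fun _ _ => 0
  | p :: L => fun t x => if ppos p t = x then p.2 - p.1 else vel L t x

lemma vel_meas {d : ℕ} (L : List (Euc d × Euc d)) :
    Measurable (Function.uncurry (vel L)) := by
  induction L with
  | nil => exact measurable_const
  | cons p L ih =>
    have : Function.uncurry (vel (p :: L)) = fun q : ℝ × Euc d =>
        if ppos p q.1 = q.2 then p.2 - p.1 else Function.uncurry (vel L) q := rfl
    rw [this]
    refine Measurable.ite ?_ measurable_const ih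
    have : IsClosed {q : ℝ × Euc d | ppos p q.1 = q.2} :=
      isClosed_eq ((ppos_cont p).comp continuous_fst) continuous_snd
    exact this.measurableSet

lemma vel_cases {d : ℕ} (L : List (Euc d × Euc d)) (t : ℝ) (x : Euc d) :
    vel L t x = 0 ∨ ∃ p ∈ L, vel L t x = p.2 - p.1 := by
  induction L with
  | nil => exact Or.inl rfl
  | cons p L ih =>
    by_cases h : ppos p t = x
    · exact Or.inr ⟨p, List.mem_cons_self, by simp [vel, h]⟩
    · rcases ih with h0 | ⟨q, hq, heq⟩
      · exact Or.inl (by simp [vel, h, h0])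
      · exact Or.inr ⟨q, List.mem_cons_of_mem p hq, by simp [vel, h, heq]⟩

lemma vel_eq {d : ℕ} (L : List (Euc d × Euc d)) (hL : L.Nodup) (t : ℝ)
    (ht : ∀ p ∈ L, ∀ q ∈ L, p ≠ q → ppos p t ≠ ppos q t) :
    ∀ p ∈ L, vel L t (ppos p t) = p.2 - p.1 := by
  induction L with
  | nil => intro p hp; simp at hp
  | cons q L ih =>
    intro p hp
    rcases List.mem_cons.mp hp with rfl | hpL
    · simp [vel]
    · have hqp : q ≠ p := by
        rintro rfl
        exact (List.nodup_cons.mp hL).1 hpL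
      have hne : ppos q t ≠ ppos p t :=
        ht q List.mem_cons_self p (List.mem_cons_of_mem q hpL) hqp
      have : vel (q :: L) t (ppos p t) = vel L t (ppos p t) := by
        simp [vel, hne]
      rw [this]
      exact ih (List.nodup_cons.mp hL).2
        (fun a ha b hb hab => ht a (List.mem_cons_of_mem q ha) b (List.mem_cons_of_mem q hb) hab)
        p hpL

def badT {d : ℕ} (F : Finset (Euc d × Euc d)) : Set ℝ :=
  ⋃ p ∈ F, ⋃ q ∈ F, {t | p ≠ q ∧ ppos p t = ppos q t}

lemma badT_countable {d : ℕ} (F : Finset (Euc d × Euc d)) : (badT F).Countable := by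
  refine Set.Countable.biUnion F.countable_toSet fun p _ =>
    Set.Countable.biUnion F.countable_toSet fun q _ => ?_
  refine Set.Subsingleton.countable ?_
  rintro t ⟨hpq, ht⟩ s ⟨_, hs⟩
  by_contra hts
  apply hpq
  have e1 : p.1 + t • (p.2 - p.1) = q.1 + t • (q.2 - q.1) := ht
  have e2 : p.1 + s • (p.2 - p.1) = q.1 + s • (q.2 - q.1) := hs
  have f1 : p.1 + t • (p.2 - p.1) - (q.1 + t • (q.2 - q.1)) = 0 := sub_eq_zero.mpr e1
  have f2 : p.1 + s • (p.2 - p.1) - (q.1 + s • (q.2 - q.1)) = 0 := sub_eq_zero.mpr e2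
  have h1 : (t - s) • ((p.2 - p.1) - (q.2 - q.1)) = 0 := by
    have key : (t - s) • ((p.2 - p.1) - (q.2 - q.1))
        = (p.1 + t • (p.2 - p.1) - (q.1 + t • (q.2 - q.1)))
          - (p.1 + s • (p.2 - p.1) - (q.1 + s • (q.2 - q.1))) := by
      module
    rw [key, f1, f2, sub_zero]
  have h2 : (p.2 - p.1) - (q.2 - q.1) = 0 := by
    rcases smul_eq_zero.mp h1 with h | h
    · exact absurd (sub_eq_zero.mp h) hts
    · exact h
  have h3 : p.2 - p.1 = q.2 - q.1 := sub_eq_zero.mp h2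
  have h4 : p.1 = q.1 := by
    rw [h3] at e1
    exact add_right_cancel e1
  have h5 : p.2 = q.2 := by
    have := h3
    rw [h4] at this
    exact sub_left_injective this
  exact Prod.ext h4 h5

lemma badT_vol {d : ℕ} (F : Finset (Euc d × Euc d)) : volume (badT F) = 0 :=
  (badT_countable F).measure_zero _

lemma good_of_not_bad {d : ℕ} {F : Finset (Euc d × Euc d)} {t : ℝ} (ht : t ∉ badT F) :
    ∀ p ∈ F, ∀ q ∈ F, p ≠ q → ppos p t ≠ ppos q t := by
  intro p hp q hq hpq heq
  exact ht (mem_iUnion₂.mpr ⟨p, hp, mem_iUnion₂.mpr ⟨q, hq, ⟨hpq, heq⟩⟩⟩)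

end Kinematics

section Construct
open scoped Classical

theorem construct {d : ℕ} (Ω : Set (Euc d)) (hΩconv : Convex ℝ Ω) (hΩm : MeasurableSet Ω)
    (F : Finset (Euc d × Euc d)) (hF : ∀ p ∈ F, p.1 ∈ Ω ∧ p.2 ∈ Ω)
    (m : Euc d × Euc d → ℝ≥0) (hm1 : ∑ p ∈ F, m p = 1)
    {α : ℝ} (hα0 : 0 < α) (hα1 : α < 1) :
    ∃ ρ v, AdmissiblePair Ω ρ v ∧
      ρ 0 = ∑ p ∈ F, (m p : ℝ≥0∞) • Measure.dirac p.1 ∧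
      ρ 1 = ∑ p ∈ F, (m p : ℝ≥0∞) • Measure.dirac p.2 ∧
      energyF α ρ v ≤ ∑ p ∈ F, (m p : ℝ≥0∞) ^ α * (‖p.1 - p.2‖₊ : ℝ≥0∞) := by
  set ρ : ℝ → Measure (Euc d) :=
    fun t => ∑ p ∈ F, (m p : ℝ≥0∞) • Measure.dirac (ppos p t) with hρdef
  set v : ℝ → Euc d → Euc d := vel F.toList with hvdef
  have hρuniv : ∀ t, ρ t Set.univ = 1 := by
    intro t
    rw [hρdef]
    rw [apply_sum_smul_dirac F m (fun p => ppos p t) Set.univ MeasurableSet.univ]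
    simp only [Set.mem_univ, if_true]
    rw [← ENNReal.coe_finset_sum, hm1, ENNReal.coe_one]
  have hint : ∀ (t : ℝ) (f : Euc d → ℝ), StronglyMeasurable f →
      ∫ x, f x ∂(ρ t) = ∑ p ∈ F, (m p : ℝ) * f (ppos p t) := by
    intro t f hf
    rw [hρdef]
    exact integral_sum_smul_dirac F m (fun p => ppos p t) f hf
  have hlint : ∀ (t : ℝ) (f : Euc d → ℝ≥0∞),
      ∫⁻ x, f x ∂(ρ t) = ∑ p ∈ F, (m p : ℝ≥0∞) * f (ppos p t) := by
    intro t f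
    rw [hρdef]
    exact lintegral_sum_smul_dirac F m (fun p => ppos p t) f
  have hvt_meas : ∀ t : ℝ, Measurable (v t) := by
    intro t
    exact (vel_meas F.toList).comp (measurable_prodMk_left)
  -- the atom masses at good times
  have hatom : ∀ t, t ∉ badT F → ∀ p ∈ F, ρ t {ppos p t} = (m p : ℝ≥0∞) := by
    intro t ht p hp
    rw [hρdef, apply_sum_smul_dirac F m (fun q => ppos q t) _ (measurableSet_singleton _)]
    rw [Finset.sum_eq_single p]
    · simp
    · intro q hq hqp
      have : ppos q t ≠ ppos p t := good_of_not_bad ht q hq p hp hqp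
      simp [Set.mem_singleton_iff, this]
    · intro h; exact absurd hp h
  have hvel_eq : ∀ t, t ∉ badT F → ∀ p ∈ F, v t (ppos p t) = p.2 - p.1 := by
    intro t ht p hp
    rw [hvdef]
    refine vel_eq F.toList F.nodup_toList t ?_ p (Finset.mem_toList.mpr hp)
    intro a ha b hb hab
    exact good_of_not_bad ht a (Finset.mem_toList.mp ha) b (Finset.mem_toList.mp hb) hab
  have hae : ∀ᵐ t : ℝ, t ∉ badT F := by
    rw [← MeasureTheory.measure_eq_zero_iff_ae_notMem]
    exact badT_vol F
  refine ⟨ρ, v, ⟨?_, ?_, ?_, ?_, ?_, ?_⟩, ?_, ?_, ?_⟩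
  · -- prob
    intro t _
    exact ⟨hρuniv t⟩
  · -- supp
    intro t htIcc
    rw [hρdef, apply_sum_smul_dirac F m (fun p => ppos p t) _ hΩm.compl]
    refine Finset.sum_eq_zero fun p hp => ?_
    have : ppos p t ∈ Ω := ppos_mem hΩconv (hF p hp).1 (hF p hp).2 htIcc
    simp [this]
  · -- weakCont
    intro f hf
    have heq : (fun t => ∫ x, f x ∂(ρ t)) = fun t => ∑ p ∈ F, (m p : ℝ) * f (ppos p t) :=
      funext fun t => hint t f hf.stronglyMeasurable
    rw [heq]
    refine Continuous.continuousOn ?_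
    exact continuous_finset_sum F fun p _ =>
      continuous_const.mul (hf.comp (ppos_cont p))
  · -- vMeas
    exact vel_meas F.toList
  · -- vInt
    set C : ℝ≥0∞ := ∑ p ∈ F, (‖p.2 - p.1‖₊ : ℝ≥0∞) with hC
    have hCtop : C < ⊤ := ENNReal.sum_lt_top.mpr fun p _ => ENNReal.coe_lt_top
    have hvb : ∀ t x, (‖v t x‖₊ : ℝ≥0∞) ≤ C := by
      intro t x
      rcases vel_cases F.toList t x with h0 | ⟨p, hp, heq⟩
      · rw [hvdef, h0]; simp
      · rw [hvdef, heq, hC]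
        exact Finset.single_le_sum (f := fun q : Euc d × Euc d => ((‖q.2 - q.1‖₊ : ℝ≥0∞)))
          (fun q _ => zero_le) (Finset.mem_toList.mp hp)
    calc ∫⁻ t in Icc (0:ℝ) 1, ∫⁻ x, (‖v t x‖₊ : ℝ≥0∞) ∂(ρ t)
        ≤ ∫⁻ _t in Icc (0:ℝ) 1, C := by
          refine setLIntegral_mono' measurableSet_Icc fun t _ => ?_
          calc ∫⁻ x, (‖v t x‖₊ : ℝ≥0∞) ∂(ρ t) ≤ ∫⁻ _x, C ∂(ρ t) :=
                lintegral_mono fun x => hvb t x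
            _ = C * ρ t Set.univ := lintegral_const C
            _ = C := by rw [hρuniv t, mul_one]
      _ = C * volume (Icc (0:ℝ) 1) := setLIntegral_const _ C
      _ < ⊤ := by
          rw [Real.volume_Icc]
          exact ENNReal.mul_lt_top hCtop (by norm_num)
  · -- contEq
    intro φ hφ hφ0 hφ1
    set Φ := Function.uncurry φ with hΦ
    have hD : Differentiable ℝ Φ := hφ.differentiable (by simp)
    have hDc : Continuous (fderiv ℝ Φ) := hφ.continuous_fderiv (by simp)
    have hpart1 : ∀ (t : ℝ) (x : Euc d),
        HasDerivAt (fun s => φ s x) (fderiv ℝ Φ (t, x) (1, 0)) t := by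
      intro t x
      have h1 : HasDerivAt (fun s : ℝ => (s, x)) ((1:ℝ), (0:Euc d)) t :=
        (hasDerivAt_id t).prodMk (hasDerivAt_const t x)
      exact (hD (t, x)).hasFDerivAt.comp_hasDerivAt t h1
    have hpart2 : ∀ (t : ℝ) (x : Euc d),
        HasFDerivAt (φ t)
          ((fderiv ℝ Φ (t, x)).comp (ContinuousLinearMap.inr ℝ ℝ (Euc d))) x := by
      intro t x
      have h1 : HasFDerivAt (fun y : Euc d => (t, y))
          (ContinuousLinearMap.inr ℝ ℝ (Euc d)) x := hasFDerivAt_prodMk_right t x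
      exact (hD (t, x)).hasFDerivAt.comp x h1
    set h_sum : ℝ → ℝ := fun t => ∑ p ∈ F, (m p : ℝ) * φ t (ppos p t) with hhsum
    set D : ℝ → ℝ :=
      fun t => ∑ p ∈ F, (m p : ℝ) * (fderiv ℝ Φ (t, ppos p t) (1, p.2 - p.1)) with hDdef
    have hsum_deriv : ∀ t, HasDerivAt h_sum (D t) t := by
      intro t
      refine HasDerivAt.fun_sum fun p _ => ?_
      have hcurve : HasDerivAt (fun s : ℝ => (s, ppos p s)) ((1:ℝ), p.2 - p.1) t :=
        (hasDerivAt_id t).prodMk (ppos_hasDerivAt p t)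
      have := (hD (t, ppos p t)).hasFDerivAt.comp_hasDerivAt t hcurve
      exact this.const_mul _
    have hDcont : Continuous D := by
      refine continuous_finset_sum F fun p _ => continuous_const.mul ?_
      have h1 : Continuous fun t : ℝ => fderiv ℝ Φ (t, ppos p t) :=
        hDc.comp (continuous_id.prodMk (ppos_cont p))
      exact h1.clm_apply continuous_const
    have hIeq : ∀ t, t ∉ badT F →
        ((∫ x, deriv (fun s => φ s x) t ∂(ρ t)) +
          ∫ x, fderiv ℝ (φ t) x (v t x) ∂(ρ t)) = D t := by
      intro t ht
      have e1 : (∫ x, deriv (fun s => φ s x) t ∂(ρ t))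
          = ∑ p ∈ F, (m p : ℝ) * (fderiv ℝ Φ (t, ppos p t) (1, 0)) := by
        have hfeq : (fun x => deriv (fun s => φ s x) t)
            = fun x => fderiv ℝ Φ (t, x) (1, 0) :=
          funext fun x => (hpart1 t x).deriv
        rw [hfeq]
        refine hint t _ ?_
        have : Continuous fun x : Euc d => fderiv ℝ Φ (t, x) (1, 0) :=
          (hDc.comp (continuous_const.prodMk continuous_id)).clm_apply continuous_const
        exact this.stronglyMeasurable
      have e2 : (∫ x, fderiv ℝ (φ t) x (v t x) ∂(ρ t))
          = ∑ p ∈ F, (m p : ℝ) * (fderiv ℝ Φ (t, ppos p t) (0, v t (ppos p t))) := by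
        have hfeq : (fun x => fderiv ℝ (φ t) x (v t x))
            = fun x => fderiv ℝ Φ (t, x) (0, v t x) := by
          funext x
          rw [(hpart2 t x).fderiv]
          rfl
        rw [hfeq]
        refine hint t _ ?_
        have hB : Continuous fun z : Euc d × Euc d => fderiv ℝ Φ (t, z.1) (0, z.2) := by
          have h1 : Continuous fun z : Euc d × Euc d => fderiv ℝ Φ (t, z.1) :=
            hDc.comp (continuous_const.prodMk continuous_fst)
          exact h1.clm_apply (continuous_const.prodMk continuous_snd)
        have : Measurable fun x => fderiv ℝ Φ (t, x) (0, v t x) :=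
          hB.measurable.comp (measurable_id.prodMk (hvt_meas t))
        exact this.stronglyMeasurable
      rw [e1, e2, ← Finset.sum_add_distrib]
      refine Finset.sum_congr rfl fun p hp => ?_
      rw [hvel_eq t ht p hp, ← mul_add, ← ContinuousLinearMap.map_add]
      congr 2
      rw [Prod.mk_add_mk, add_zero, zero_add]
    have hcongr : (∫ t in Icc (0:ℝ) 1,
        ((∫ x, deriv (fun s => φ s x) t ∂(ρ t)) +
          ∫ x, fderiv ℝ (φ t) x (v t x) ∂(ρ t)))
        = ∫ t in Icc (0:ℝ) 1, D t := by
      refine setIntegral_congr_ae measurableSet_Icc ?_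
      filter_upwards [hae] with t ht _
      exact hIeq t ht
    rw [hcongr]
    have hDderiv : D = deriv h_sum := funext fun t => ((hsum_deriv t).deriv).symm
    have hfund : ∫ t in Icc (0:ℝ) 1, D t = h_sum 1 - h_sum 0 := by
      rw [integral_Icc_eq_integral_Ioc, ← intervalIntegral.integral_of_le zero_le_one]
      rw [hDderiv]
      refine intervalIntegral.integral_deriv_eq_sub
        (fun x _ => (hsum_deriv x).differentiableAt) ?_
      rw [← hDderiv]
      exact hDcont.intervalIntegrable 0 1
    rw [hfund, hhsum]
    simp only [hφ0, hφ1, mul_zero]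
    simp
  · -- endpoints 0
    rw [hρdef]
    refine Finset.sum_congr rfl fun p _ => by rw [ppos_zero]
  · -- endpoints 1
    rw [hρdef]
    refine Finset.sum_congr rfl fun p _ => by rw [ppos_one]
  · -- energy
    have hFa : ∀ t, t ∉ badT F →
        Fa α (ρ t) (v t) = ∑ p ∈ F, (m p : ℝ≥0∞) ^ α * (‖p.1 - p.2‖₊ : ℝ≥0∞) := by
      intro t ht
      rw [Fa, hlint t]
      refine Finset.sum_congr rfl fun p hp => ?_
      rw [hvel_eq t ht p hp, hatom t ht p hp]
      have hnorm : (‖p.2 - p.1‖₊ : ℝ≥0∞) = (‖p.1 - p.2‖₊ : ℝ≥0∞) := by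
        rw [← neg_sub, nnnorm_neg]
      rw [hnorm]
      rcases eq_or_ne (m p) 0 with h0 | h0
      · rw [h0]
        simp [ENNReal.zero_rpow_of_pos hα0]
      · have hne : (m p : ℝ≥0∞) ≠ 0 := by simpa using h0
        have htop : (m p : ℝ≥0∞) ≠ ⊤ := ENNReal.coe_ne_top
        calc (m p : ℝ≥0∞) * ((‖p.1 - p.2‖₊ : ℝ≥0∞) * (m p : ℝ≥0∞) ^ (α - 1))
            = ((m p : ℝ≥0∞) ^ (1:ℝ) * (m p : ℝ≥0∞) ^ (α - 1)) * (‖p.1 - p.2‖₊ : ℝ≥0∞) := by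
              rw [ENNReal.rpow_one]; ring
          _ = (m p : ℝ≥0∞) ^ α * (‖p.1 - p.2‖₊ : ℝ≥0∞) := by
              rw [← ENNReal.rpow_add _ _ hne htop]
              norm_num
    calc energyF α ρ v
        = ∫⁻ t in Icc (0:ℝ) 1, ∑ p ∈ F, (m p : ℝ≥0∞) ^ α * (‖p.1 - p.2‖₊ : ℝ≥0∞) := by
          rw [energyF]
          refine setLIntegral_congr_fun_ae measurableSet_Icc ?_
          filter_upwards [hae] with t ht _
          exact hFa t ht
      _ = (∑ p ∈ F, (m p : ℝ≥0∞) ^ α * (‖p.1 - p.2‖₊ : ℝ≥0∞)) * volume (Icc (0:ℝ) 1) :=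
          setLIntegral_const _ _
      _ ≤ _ := by
          rw [Real.volume_Icc]
          norm_num

end Construct

/-- Branched transport between finitely atomic measures is controlled by
the `1/α`-Wasserstein distance: if `μ0, μ1` are each supported on at most `n` points,
there is `(ρ, v) ∈ 𝔇(μ0, μ1)` with `ℱ_α(ρ, v) ≤ (2n)^{1-α} · W_{1/α}(μ0, μ1)`;
in particular `ℬ_α(μ0, μ1) ≤ (2n)^{1-α} W_{1/α}(μ0, μ1)`. -/
theorem atomic_branched_bound
    (d : ℕ) (hd : 1 ≤ d) (Ω : Set (Euc d)) (hΩc : IsCompact Ω) (hΩconv : Convex ℝ Ω)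
    (α : ℝ) (hα : α ∈ Ioo (0:ℝ) 1)
    (n : ℕ) (hn : 1 ≤ n)
    (μ0 μ1 : Measure (Euc d)) (h0p : IsProbabilityMeasure μ0) (h1p : IsProbabilityMeasure μ1)
    (h0s : μ0 Ωᶜ = 0) (h1s : μ1 Ωᶜ = 0)
    (S0 S1 : Set (Euc d)) (hS0 : S0.Finite) (hS1 : S1.Finite)
    (hS0n : S0.ncard ≤ n) (hS1n : S1.ncard ≤ n)
    (h0a : μ0 S0ᶜ = 0) (h1a : μ1 S1ᶜ = 0) :
    ∃ (ρ : ℝ → Measure (Euc d)) (v : ℝ → Euc d → Euc d),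
      InD Ω μ0 μ1 ρ v ∧
      energyF α ρ v ≤ ((2 * n : ℕ) : ℝ≥0∞) ^ (1 - α) * Wasser (1 / α) μ0 μ1 ∧
      Balpha Ω α μ0 μ1 ≤ ((2 * n : ℕ) : ℝ≥0∞) ^ (1 - α) * Wasser (1 / α) μ0 μ1 := by
  classical
  have hα0 : 0 < α := hα.1
  have hα1 : α < 1 := hα.2
  -- atom sets inside Ω
  set A : Finset (Euc d) := hS0.toFinset.filter (· ∈ Ω) with hA
  set B : Finset (Euc d) := hS1.toFinset.filter (· ∈ Ω) with hB
  have hΩmeas : MeasurableSet Ω := hΩc.isClosed.measurableSet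
  have hA0 : μ0 (↑A)ᶜ = 0 := by
    refine measure_mono_null ?_ (measure_union_null h0a h0s)
    intro x hx
    by_contra h
    simp only [Set.mem_union, Set.mem_compl_iff, not_or, not_not] at h
    rw [Set.mem_compl_iff, Finset.mem_coe] at hx
    exact hx (Finset.mem_filter.mpr ⟨hS0.mem_toFinset.mpr h.1, h.2⟩)
  have hB0 : μ1 (↑B)ᶜ = 0 := by
    refine measure_mono_null ?_ (measure_union_null h1a h1s)
    intro x hx
    by_contra h
    simp only [Set.mem_union, Set.mem_compl_iff, not_or, not_not] at h
    rw [Set.mem_compl_iff, Finset.mem_coe] at hx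
    exact hx (Finset.mem_filter.mpr ⟨hS1.mem_toFinset.mpr h.1, h.2⟩)
  have hAΩ : ∀ x ∈ A, x ∈ Ω := fun x hx => (Finset.mem_filter.mp hx).2
  have hBΩ : ∀ y ∈ B, y ∈ Ω := fun y hy => (Finset.mem_filter.mp hy).2
  have hAcard : A.card ≤ n := by
    calc A.card ≤ hS0.toFinset.card := Finset.card_filter_le _ _
      _ = S0.ncard := (Set.ncard_eq_toFinset_card S0 hS0).symm
      _ ≤ n := hS0n
  have hBcard : B.card ≤ n := by
    calc B.card ≤ hS1.toFinset.card := Finset.card_filter_le _ _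
      _ = S1.ncard := (Set.ncard_eq_toFinset_card S1 hS1).symm
      _ ≤ n := hS1n
  -- representations
  have hrepr0 : μ0 = ∑ x ∈ A, μ0 {x} • Measure.dirac x := measure_eq_sum_dirac μ0 A hA0
  have hrepr1 : μ1 = ∑ y ∈ B, μ1 {y} • Measure.dirac y := measure_eq_sum_dirac μ1 B hB0
  set aN : Euc d → ℝ≥0 := fun x => (μ0 {x}).toNNReal with haN
  set bN : Euc d → ℝ≥0 := fun y => (μ1 {y}).toNNReal with hbN
  have haNcoe : ∀ x, ((aN x : ℝ≥0∞)) = μ0 {x} :=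
    fun x => ENNReal.coe_toNNReal (measure_ne_top μ0 _)
  have hbNcoe : ∀ y, ((bN y : ℝ≥0∞)) = μ1 {y} :=
    fun y => ENNReal.coe_toNNReal (measure_ne_top μ1 _)
  set a : Euc d → ℝ := fun x => ((aN x : ℝ)) with ha
  set b : Euc d → ℝ := fun y => ((bN y : ℝ)) with hb
  have ha0 : ∀ x, 0 ≤ a x := fun x => (aN x).2
  have hb0 : ∀ y, 0 ≤ b y := fun y => (bN y).2
  have haN1 : ∑ x ∈ A, (aN x : ℝ≥0∞) = 1 := by
    have := congrArg (fun μ : Measure (Euc d) => μ Set.univ) hrepr0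
    simp only [measure_univ] at this
    rw [Measure.finset_sum_apply] at this
    rw [this]
    refine Finset.sum_congr rfl fun x _ => ?_
    rw [Measure.smul_apply, Measure.dirac_apply' _ MeasurableSet.univ]
    simp [haNcoe x]
  have hbN1 : ∑ y ∈ B, (bN y : ℝ≥0∞) = 1 := by
    have := congrArg (fun μ : Measure (Euc d) => μ Set.univ) hrepr1
    simp only [measure_univ] at this
    rw [Measure.finset_sum_apply] at this
    rw [this]
    refine Finset.sum_congr rfl fun y _ => ?_
    rw [Measure.smul_apply, Measure.dirac_apply' _ MeasurableSet.univ]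
    simp [hbNcoe y]
  have ha1 : ∑ x ∈ A, a x = 1 := by
    have := congrArg ENNReal.toReal haN1
    rw [ENNReal.toReal_sum (fun x _ => ENNReal.coe_ne_top)] at this
    simpa [ha] using this
  have hb1 : ∑ y ∈ B, b y = 1 := by
    have := congrArg ENNReal.toReal hbN1
    rw [ENNReal.toReal_sum (fun y _ => ENNReal.coe_ne_top)] at this
    simpa [hb] using this
  have haLe1 : ∀ x, a x ≤ 1 := by
    intro x
    have h1 : μ0 {x} ≤ 1 := prob_le_one
    have := ENNReal.toReal_mono (by norm_num) h1
    exact this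
  have hbLe1 : ∀ y, b y ≤ 1 := by
    intro y
    have h1 : μ1 {y} ≤ 1 := prob_le_one
    have := ENNReal.toReal_mono (by norm_num) h1
    exact this
  -- polytope of couplings
  set Fs : Finset (Euc d × Euc d) := A ×ˢ B with hFs
  set cr : Euc d × Euc d → ℝ := fun p => ‖p.1 - p.2‖ ^ (1/α) with hcr
  have hcr0 : ∀ p, 0 ≤ cr p := fun p => Real.rpow_nonneg (norm_nonneg _) _
  set P : Set ((Euc d × Euc d) → ℝ) := {mm | (∀ p, 0 ≤ mm p) ∧ (∀ p ∉ Fs, mm p = 0) ∧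
    (∀ x ∈ A, ∑ y ∈ B, mm (x, y) = a x) ∧ (∀ y ∈ B, ∑ x ∈ A, mm (x, y) = b y)} with hP
  set cost : ((Euc d × Euc d) → ℝ) → ℝ := fun mm => ∑ p ∈ Fs, mm p * cr p with hcost
  have hPne : P.Nonempty := by
    refine ⟨fun p => if p ∈ Fs then a p.1 * b p.2 else 0, ?_, ?_, ?_, ?_⟩
    · intro p
      by_cases h : p ∈ Fs <;> simp [h, mul_nonneg (ha0 _) (hb0 _)]
    · intro p hp; simp [hp]
    · intro x hx
      have hmem : ∀ y ∈ B, ((x, y) ∈ Fs) := fun y hy => Finset.mem_product.mpr ⟨hx, hy⟩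
      refine Eq.trans (Finset.sum_congr rfl fun y hy => ?_)
        (by rw [← Finset.mul_sum, hb1, mul_one])
      simp [hmem y hy]
    · intro y hy
      have hmem : ∀ x ∈ A, ((x, y) ∈ Fs) := fun x hx => Finset.mem_product.mpr ⟨hx, hy⟩
      refine Eq.trans (Finset.sum_congr rfl fun x hx => ?_)
        (by rw [← Finset.sum_mul, ha1, one_mul])
      simp [hmem x hx]
  have hPclosed : IsClosed P := by
    have h1 : IsClosed {mm : (Euc d × Euc d) → ℝ | ∀ p, 0 ≤ mm p} := by
      have : {mm : (Euc d × Euc d) → ℝ | ∀ p, 0 ≤ mm p}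
          = ⋂ p, {mm | 0 ≤ mm p} := by ext mm; simp
      rw [this]
      exact isClosed_iInter fun p => isClosed_le continuous_const (continuous_apply p)
    have h2 : IsClosed {mm : (Euc d × Euc d) → ℝ | ∀ p ∉ Fs, mm p = 0} := by
      have : {mm : (Euc d × Euc d) → ℝ | ∀ p ∉ Fs, mm p = 0}
          = ⋂ p ∈ {q | q ∉ Fs}, {mm | mm p = 0} := by ext mm; simp
      rw [this]
      exact isClosed_biInter fun p _ => isClosed_eq (continuous_apply p) continuous_const
    have h3 : IsClosed {mm : (Euc d × Euc d) → ℝ | ∀ x ∈ A, ∑ y ∈ B, mm (x, y) = a x} := by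
      have : {mm : (Euc d × Euc d) → ℝ | ∀ x ∈ A, ∑ y ∈ B, mm (x, y) = a x}
          = ⋂ x ∈ (↑A : Set (Euc d)), {mm | ∑ y ∈ B, mm (x, y) = a x} := by ext mm; simp
      rw [this]
      exact isClosed_biInter fun x _ => isClosed_eq
        (continuous_finset_sum _ fun y _ => continuous_apply (x, y)) continuous_const
    have h4 : IsClosed {mm : (Euc d × Euc d) → ℝ | ∀ y ∈ B, ∑ x ∈ A, mm (x, y) = b y} := by
      have : {mm : (Euc d × Euc d) → ℝ | ∀ y ∈ B, ∑ x ∈ A, mm (x, y) = b y}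
          = ⋂ y ∈ (↑B : Set (Euc d)), {mm | ∑ x ∈ A, mm (x, y) = b y} := by ext mm; simp
      rw [this]
      exact isClosed_biInter fun y _ => isClosed_eq
        (continuous_finset_sum _ fun x _ => continuous_apply (x, y)) continuous_const
    have : P = {mm : (Euc d × Euc d) → ℝ | ∀ p, 0 ≤ mm p}
        ∩ ({mm | ∀ p ∉ Fs, mm p = 0}
        ∩ ({mm | ∀ x ∈ A, ∑ y ∈ B, mm (x, y) = a x}
        ∩ {mm | ∀ y ∈ B, ∑ x ∈ A, mm (x, y) = b y})) := by
      ext mm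
      simp only [hP, Set.mem_setOf_eq, Set.mem_inter_iff]
      try tauto
    rw [this]
    exact h1.inter (h2.inter (h3.inter h4))
  have hPsub : P ⊆ Set.pi Set.univ (fun _ : Euc d × Euc d => Icc (0:ℝ) 1) := by
    rintro mm ⟨hmm0, hmmoff, hmmrow, _⟩ p _
    refine ⟨hmm0 p, ?_⟩
    by_cases hp : p ∈ Fs
    · obtain ⟨hp1, hp2⟩ := Finset.mem_product.mp hp
      have hle : mm p ≤ ∑ y ∈ B, mm (p.1, y) := by
        have := Finset.single_le_sum (f := fun y => mm (p.1, y))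
          (fun y _ => hmm0 _) hp2
        simpa [Prod.mk.eta] using this
      calc mm p ≤ a p.1 := by rw [← hmmrow p.1 hp1]; exact hle
        _ ≤ 1 := haLe1 p.1
    · rw [hmmoff p hp]; norm_num
  have hPcompact : IsCompact P :=
    IsCompact.of_isClosed_subset (isCompact_univ_pi fun _ => isCompact_Icc) hPclosed hPsub
  have hcostcont : Continuous cost :=
    continuous_finset_sum _ fun p _ => (continuous_apply p).mul continuous_const
  obtain ⟨mstar, hmstarP, hmin⟩ := hPcompact.exists_isMinOn hPne hcostcont.continuousOn
  -- sparsify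
  obtain ⟨m', hm'0, hm'off, hm'row, hm'col, hm'cost, hm'card⟩ :=
    sparsify A B cr ((Fs.filter (fun p => mstar p ≠ 0)).card) mstar hmstarP.1 hmstarP.2.1
      le_rfl
  have hm'P : m' ∈ P :=
    ⟨hm'0, hm'off, fun x hx => (hm'row x hx).trans (hmstarP.2.2.1 x hx),
      fun y hy => (hm'col y hy).trans (hmstarP.2.2.2 y hy)⟩
  -- build the admissible pair
  set mN : Euc d × Euc d → ℝ≥0 := fun p => (m' p).toNNReal with hmN
  have hmNcoe : ∀ p, ((mN p : ℝ) ) = m' p := fun p => Real.coe_toNNReal _ (hm'0 p)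
  have hmN1 : ∑ p ∈ Fs, mN p = 1 := by
    have hreal : ((∑ p ∈ Fs, mN p : ℝ≥0) : ℝ) = 1 := by
      push_cast
      rw [Finset.sum_congr rfl (fun p _ => hmNcoe p)]
      rw [hFs, Finset.sum_product]
      rw [Finset.sum_congr rfl (fun x hx => hm'P.2.2.1 x hx)]
      exact ha1
    exact_mod_cast hreal
  have hFmem : ∀ p ∈ Fs, p.1 ∈ Ω ∧ p.2 ∈ Ω := by
    intro p hp
    obtain ⟨hp1, hp2⟩ := Finset.mem_product.mp hp
    exact ⟨hAΩ _ hp1, hBΩ _ hp2⟩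
  obtain ⟨ρ, v, hadm, hρ0, hρ1, henergy⟩ :=
    construct Ω hΩconv hΩmeas Fs hFmem mN hmN1 hα0 hα1
  -- endpoints
  have hρ0' : ρ 0 = μ0 := by
    rw [hρ0, hFs, Finset.sum_product]
    rw [hrepr0]
    refine Finset.sum_congr rfl fun x hx => ?_
    have : ∑ y ∈ B, (mN (x, y) : ℝ≥0∞) • Measure.dirac x
        = (∑ y ∈ B, (mN (x, y) : ℝ≥0∞)) • Measure.dirac x := (Finset.sum_smul).symm
    rw [this]
    congr 1
    rw [← haNcoe x]
    have : ∑ y ∈ B, (mN (x, y) : ℝ≥0∞) = ((∑ y ∈ B, mN (x, y) : ℝ≥0) : ℝ≥0∞) := by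
      push_cast; rfl
    rw [this]
    congr 1
    have : ((∑ y ∈ B, mN (x, y) : ℝ≥0) : ℝ) = ((aN x : ℝ)) := by
      push_cast
      rw [Finset.sum_congr rfl (fun y _ => hmNcoe (x, y))]
      exact hm'P.2.2.1 x hx
    exact_mod_cast this
  have hρ1' : ρ 1 = μ1 := by
    rw [hρ1, hFs, Finset.sum_product_right]
    rw [hrepr1]
    refine Finset.sum_congr rfl fun y hy => ?_
    have : ∑ x ∈ A, (mN (x, y) : ℝ≥0∞) • Measure.dirac y
        = (∑ x ∈ A, (mN (x, y) : ℝ≥0∞)) • Measure.dirac y := (Finset.sum_smul).symm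
    rw [this]
    congr 1
    rw [← hbNcoe y]
    have : ∑ x ∈ A, (mN (x, y) : ℝ≥0∞) = ((∑ x ∈ A, mN (x, y) : ℝ≥0) : ℝ≥0∞) := by
      push_cast; rfl
    rw [this]
    congr 1
    have : ((∑ x ∈ A, mN (x, y) : ℝ≥0) : ℝ) = ((bN y : ℝ)) := by
      push_cast
      rw [Finset.sum_congr rfl (fun x _ => hmNcoe (x, y))]
      exact hm'P.2.2.2 y hy
    exact_mod_cast this
  have hInD : InD Ω μ0 μ1 ρ v := ⟨hadm, hρ0', hρ1'⟩
  -- energy estimate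
  set u : Euc d × Euc d → ℝ≥0∞ :=
    fun p => (mN p : ℝ≥0∞) * ((‖p.1 - p.2‖₊ : ℝ≥0∞)) ^ (1/α) with hu
  set Ssupp : Finset (Euc d × Euc d) := Fs.filter (fun p => m' p ≠ 0) with hSsupp
  have husum : ∀ (s : Finset (Euc d × Euc d)), ∑ p ∈ s, u p ^ α
      = ∑ p ∈ s, (mN p : ℝ≥0∞) ^ α * (‖p.1 - p.2‖₊ : ℝ≥0∞) := by
    intro s
    refine Finset.sum_congr rfl fun p _ => ?_
    rw [hu]
    rw [ENNReal.mul_rpow_of_nonneg _ _ hα0.le, ← ENNReal.rpow_mul,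
      one_div_mul_cancel hα0.ne', ENNReal.rpow_one]
  have hE0 : ∑ p ∈ Fs, (mN p : ℝ≥0∞) ^ α * (‖p.1 - p.2‖₊ : ℝ≥0∞)
      = ∑ p ∈ Ssupp, u p ^ α := by
    rw [husum Ssupp]
    refine (Finset.sum_subset (Finset.filter_subset _ _) ?_).symm
    intro p hp hps
    have : m' p = 0 := by
      by_contra h
      exact hps (Finset.mem_filter.mpr ⟨hp, h⟩)
    have : mN p = 0 := by rw [hmN]; simp [this]
    rw [this]
    simp [ENNReal.zero_rpow_of_pos hα0]
  have hcard2n : (Ssupp.card : ℝ≥0∞) ^ (1 - α) ≤ ((2 * n : ℕ) : ℝ≥0∞) ^ (1 - α) := by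
    refine ENNReal.rpow_le_rpow ?_ (by linarith)
    have : Ssupp.card ≤ 2 * n := by
      calc Ssupp.card ≤ A.card + B.card := hm'card
        _ ≤ 2 * n := by omega
    exact_mod_cast Nat.cast_le.mpr this
  have hcrofReal : ∀ p : Euc d × Euc d,
      ENNReal.ofReal (cr p) = ((‖p.1 - p.2‖₊ : ℝ≥0∞)) ^ (1/α) := by
    intro p
    rw [hcr]
    rw [← ENNReal.ofReal_rpow_of_nonneg (norm_nonneg _) (by positivity)]
    rw [ofReal_norm, enorm_eq_nnnorm]
  -- link u-sums to real costs
  have huofReal : ∀ p ∈ Fs, u p = ENNReal.ofReal (m' p * cr p) := by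
    intro p _
    simp only [hu, hcr]
    rw [ENNReal.ofReal_mul (hm'0 p)]
    congr 1
    have h2 := hcrofReal p
    rw [hcr] at h2
    exact h2.symm
  have husum_cost : ∑ p ∈ Fs, u p = ENNReal.ofReal (cost m') := by
    rw [hcost, ENNReal.ofReal_sum_of_nonneg (fun p _ => mul_nonneg (hm'0 p) (hcr0 p))]
    exact Finset.sum_congr rfl huofReal
  -- Wasserstein lower bound
  have hWlb : ENNReal.ofReal (cost mstar) ^ α ≤ Wasser (1/α) μ0 μ1 := by
    refine le_iInf fun γ => le_iInf fun hγ => ?_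
    obtain ⟨hγprob, hγ0, hγ1⟩ := hγ
    have hexp : 1 / (1/α) = α := one_div_one_div α
    rw [hexp]
    refine ENNReal.rpow_le_rpow ?_ hα0.le
    -- the coupling matrix
    have hAm : MeasurableSet (↑A : Set (Euc d)) := (Finset.finite_toSet A).measurableSet
    have hBm : MeasurableSet (↑B : Set (Euc d)) := (Finset.finite_toSet B).measurableSet
    set c' : Euc d × Euc d → ℝ≥0∞ := fun z => ((‖z.1 - z.2‖₊ : ℝ≥0∞)) ^ (1/α) with hc'
    have hγA : γ (Prod.fst ⁻¹' (↑A)ᶜ) = 0 := by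
      rw [← Measure.map_apply measurable_fst hAm.compl, hγ0]
      exact hA0
    have hγB : γ (Prod.snd ⁻¹' (↑B)ᶜ) = 0 := by
      rw [← Measure.map_apply measurable_snd hBm.compl, hγ1]
      exact hB0
    have hγFs : γ ((↑Fs : Set (Euc d × Euc d))ᶜ) = 0 := by
      refine measure_mono_null ?_ (measure_union_null hγA hγB)
      intro z hz
      rw [Set.mem_compl_iff, Finset.mem_coe, hFs] at hz
      rw [Set.mem_union]
      by_contra h
      push_neg at h
      simp only [Set.mem_preimage, Set.mem_compl_iff, not_not, Finset.mem_coe] at h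
      exact hz (Finset.mem_product.mpr ⟨h.1, h.2⟩)
    have hsing : ∀ x : Euc d, ∀ y : Euc d,
        γ {((x : Euc d), (y : Euc d))} ≠ ⊤ := fun x y => measure_ne_top γ _
    have hmargA : ∀ x ∈ A, ∑ y ∈ B, γ {((x, y) : Euc d × Euc d)} = μ0 {x} := by
      intro x hx
      have h1 : μ0 {x} = γ (Prod.fst ⁻¹' {x}) := by
        rw [← hγ0, Measure.map_apply measurable_fst (measurableSet_singleton x)]
      have h2 : γ (Prod.fst ⁻¹' {x}) = γ (({x} : Set (Euc d)) ×ˢ (↑B : Set (Euc d))) := by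
        rw [← measure_inter_add_diff (Prod.fst ⁻¹' {x}) (measurable_snd hBm)]
        have hd : γ (Prod.fst ⁻¹' {x} \ Prod.snd ⁻¹' ↑B) = 0 := by
          refine measure_mono_null ?_ hγB
          intro z hz
          exact hz.2
        have hi : Prod.fst ⁻¹' ({x} : Set (Euc d)) ∩ Prod.snd ⁻¹' ↑B
            = ({x} : Set (Euc d)) ×ˢ (↑B : Set (Euc d)) := by
          ext z
          simp only [Set.mem_inter_iff, Set.mem_preimage, Set.mem_singleton_iff, Set.mem_prod,
            Finset.mem_coe]
        rw [hd, add_zero, hi]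
      have h3 : ({x} : Set (Euc d)) ×ˢ (↑B : Set (Euc d)) = ⋃ y ∈ B, {((x, y) : Euc d × Euc d)} := by
        ext z
        simp only [Set.mem_prod, Set.mem_singleton_iff, Set.mem_iUnion, Finset.mem_coe,
          Prod.ext_iff]
        constructor
        · rintro ⟨h1', h2'⟩; exact ⟨z.2, h2', h1', rfl⟩
        · rintro ⟨y, hy, hz1, hz2⟩; exact ⟨hz1, hz2 ▸ hy⟩
      have h4 : γ (⋃ y ∈ B, {((x, y) : Euc d × Euc d)}) = ∑ y ∈ B, γ {((x, y) : Euc d × Euc d)} := by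
        refine measure_biUnion_finset ?_ (fun y _ => measurableSet_singleton _)
        intro y hy y' hy' hne
        simp only [Function.onFun]
        refine Set.disjoint_singleton.mpr ?_
        simp [Prod.ext_iff, hne]
      rw [h1, h2, h3, h4]
    have hmargB : ∀ y ∈ B, ∑ x ∈ A, γ {((x, y) : Euc d × Euc d)} = μ1 {y} := by
      intro y hy
      have h1 : μ1 {y} = γ (Prod.snd ⁻¹' {y}) := by
        rw [← hγ1, Measure.map_apply measurable_snd (measurableSet_singleton y)]
      have h2 : γ (Prod.snd ⁻¹' {y}) = γ ((↑A : Set (Euc d)) ×ˢ ({y} : Set (Euc d))) := by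
        rw [← measure_inter_add_diff (Prod.snd ⁻¹' {y}) (measurable_fst hAm)]
        have hd : γ (Prod.snd ⁻¹' {y} \ Prod.fst ⁻¹' ↑A) = 0 := by
          refine measure_mono_null ?_ hγA
          intro z hz
          exact hz.2
        have hi : Prod.snd ⁻¹' ({y} : Set (Euc d)) ∩ Prod.fst ⁻¹' ↑A
            = (↑A : Set (Euc d)) ×ˢ ({y} : Set (Euc d)) := by
          ext z
          simp only [Set.mem_inter_iff, Set.mem_preimage, Set.mem_singleton_iff, Set.mem_prod,
            Finset.mem_coe]
          tauto
        rw [hd, add_zero, hi]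
      have h3 : (↑A : Set (Euc d)) ×ˢ ({y} : Set (Euc d)) = ⋃ x ∈ A, {((x, y) : Euc d × Euc d)} := by
        ext z
        simp only [Set.mem_prod, Set.mem_singleton_iff, Set.mem_iUnion, Finset.mem_coe,
          Prod.ext_iff]
        constructor
        · rintro ⟨h1', h2'⟩; exact ⟨z.1, h1', rfl, h2'⟩
        · rintro ⟨x, hx, hz1, hz2⟩; exact ⟨hz1 ▸ hx, hz2⟩
      have h4 : γ (⋃ x ∈ A, {((x, y) : Euc d × Euc d)}) = ∑ x ∈ A, γ {((x, y) : Euc d × Euc d)} := by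
        refine measure_biUnion_finset ?_ (fun x _ => measurableSet_singleton _)
        intro x hx x' hx' hne
        simp only [Function.onFun]
        refine Set.disjoint_singleton.mpr ?_
        simp [Prod.ext_iff, hne]
      rw [h1, h2, h3, h4]
    set mγ : Euc d × Euc d → ℝ := fun p => (γ {p}).toReal with hmγ
    have hmγP : mγ ∈ P := by
      refine ⟨fun p => ENNReal.toReal_nonneg, ?_, ?_, ?_⟩
      · intro p hp
        have : γ {p} = 0 := by
          refine measure_mono_null ?_ hγFs
          rw [Set.singleton_subset_iff, Set.mem_compl_iff, Finset.mem_coe]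
          exact hp
        simp [hmγ, this]
      · intro x hx
        have := congrArg ENNReal.toReal (hmargA x hx)
        rw [ENNReal.toReal_sum (fun y _ => measure_ne_top γ _)] at this
        exact this
      · intro y hy
        have := congrArg ENNReal.toReal (hmargB y hy)
        rw [ENNReal.toReal_sum (fun x _ => measure_ne_top γ _)] at this
        exact this
    have hcostle : cost mstar ≤ cost mγ := isMinOn_iff.mp hmin mγ hmγP
    have hofReal : ENNReal.ofReal (cost mγ) = ∑ p ∈ Fs, γ {p} * c' p := by
      rw [hcost, ENNReal.ofReal_sum_of_nonneg
        (fun p _ => mul_nonneg ENNReal.toReal_nonneg (hcr0 p))]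
      refine Finset.sum_congr rfl fun p _ => ?_
      rw [ENNReal.ofReal_mul ENNReal.toReal_nonneg]
      rw [ENNReal.ofReal_toReal (measure_ne_top γ _), hcrofReal p]
    have hsum_le : ∑ p ∈ Fs, γ {p} * c' p ≤ ∫⁻ z, c' z ∂γ := by
      have hstep1 : ∀ p : Euc d × Euc d, ∫⁻ z in {p}, c' z ∂γ = c' p * γ {p} := by
        intro p
        have : ∫⁻ z in ({p} : Set (Euc d × Euc d)), c' z ∂γ
            = ∫⁻ _z in ({p} : Set (Euc d × Euc d)), c' p ∂γ := by
          refine setLIntegral_congr_fun (measurableSet_singleton p) ?_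
          exact fun z hz => by rw [Set.mem_singleton_iff.mp hz]
        rw [this, setLIntegral_const]
      have hstep2 : ∑ p ∈ Fs, γ {p} * c' p = ∫⁻ z in (↑Fs : Set (Euc d × Euc d)), c' z ∂γ := by
        have hunion : (↑Fs : Set (Euc d × Euc d)) = ⋃ p ∈ Fs, ({p} : Set (Euc d × Euc d)) :=
          (Set.biUnion_of_singleton _).symm
        rw [hunion, lintegral_biUnion_finset ?_ (fun p _ => measurableSet_singleton p)]
        · refine Finset.sum_congr rfl fun p _ => ?_
          rw [hstep1 p, mul_comm]
        · intro p hp q hq hpq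
          simp only [Function.onFun]
          exact Set.disjoint_singleton.mpr hpq
      rw [hstep2]
      exact setLIntegral_le_lintegral _ _
    calc ENNReal.ofReal (cost mstar) ≤ ENNReal.ofReal (cost mγ) :=
          ENNReal.ofReal_le_ofReal hcostle
      _ = ∑ p ∈ Fs, γ {p} * c' p := hofReal
      _ ≤ ∫⁻ z, c' z ∂γ := hsum_le
  -- final assembly
  have hfinal : energyF α ρ v ≤ ((2 * n : ℕ) : ℝ≥0∞) ^ (1 - α) * Wasser (1/α) μ0 μ1 := by
    calc energyF α ρ v
        ≤ ∑ p ∈ Fs, (mN p : ℝ≥0∞) ^ α * (‖p.1 - p.2‖₊ : ℝ≥0∞) := henergy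
      _ = ∑ p ∈ Ssupp, u p ^ α := hE0
      _ ≤ (Ssupp.card : ℝ≥0∞) ^ (1 - α) * (∑ p ∈ Ssupp, u p) ^ α :=
          holder_count Ssupp u hα0 hα1
      _ ≤ ((2 * n : ℕ) : ℝ≥0∞) ^ (1 - α) * (∑ p ∈ Fs, u p) ^ α := by
          refine mul_le_mul' hcard2n (ENNReal.rpow_le_rpow ?_ hα0.le)
          exact Finset.sum_le_sum_of_subset (Finset.filter_subset _ _)
      _ = ((2 * n : ℕ) : ℝ≥0∞) ^ (1 - α) * (ENNReal.ofReal (cost m')) ^ α := by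
          rw [husum_cost]
      _ ≤ ((2 * n : ℕ) : ℝ≥0∞) ^ (1 - α) * (ENNReal.ofReal (cost mstar)) ^ α := by
          refine mul_le_mul' le_rfl (ENNReal.rpow_le_rpow ?_ hα0.le)
          exact ENNReal.ofReal_le_ofReal hm'cost
      _ ≤ ((2 * n : ℕ) : ℝ≥0∞) ^ (1 - α) * Wasser (1/α) μ0 μ1 :=
          mul_le_mul' le_rfl hWlb
  have hBalpha : Balpha Ω α μ0 μ1 ≤ energyF α ρ v :=
    iInf_le_of_le ρ (iInf_le_of_le v (iInf_le_of_le hInD le_rfl))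
  exact ⟨ρ, v, hInD, hfinal, hBalpha.trans hfinal⟩


end
end
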